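/- arXiv:math/0406616 — 7 statements merged into one kernel-verified Lean document; each statement's English description precedes it below -/
import Mathlib

section
/- Let P(x) = (1/√(2π)) ∫_{u∈ℝ} exp(−u²/2) ∏_{k=1}^m (x − a_k + i·u)^{n_k} du (a convergent integral of a complex-valued function). Then there exists a monic polynomial of degree |n| = n_1 + ⋯ + n_m with real coefficients whose value at every real x equals P(x). -/
/-!
For a standard Gaussian variable `U`, Gaussian integration by parts `E[U R(U)] = E[R'(U)]`
applied to `R = i (z + iU)ⁿ` gives `E[(z + iU)ⁿ⁺¹] = z E[(z + iU)ⁿ] - n E[(z + iU)ⁿ⁻¹]`, the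
three-term recurrence of the probabilists' Hermite polynomials; hence `E[(z + iU)ⁿ] = Heₙ(z)`.
By linearity `E[S(x + iU)] = ∑ c_d He_d(x)` for `S = ∑ c_d X^d = ∏ (X - a_k)^{n_k}`, and since
each `He_d` is monic of degree `d`, this polynomial is monic of the same degree as `S`.
-/

open MeasureTheory Finset Polynomial Complex

namespace Polynomial

theorem derivative_hermite_succ (n : ℕ) :
    derivative (hermite (n + 1)) = (n + 1 : ℤ[X]) * hermite n := by
  induction n with
  | zero => simp
  | succ n ih =>
    rw [hermite_succ (n + 1), derivative_sub, derivative_mul, derivative_X, ih, derivative_mul]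
    simp only [derivative_add, derivative_natCast, derivative_one]
    rw [hermite_succ n]
    push_cast
    ring

-- At `n = 0` the truncated `n - 1` is harmless: its coefficient is `0`.
theorem hermite_succ_eq_X_mul_sub_mul (n : ℕ) :
    hermite (n + 1) = X * hermite n - (n : ℤ[X]) * hermite (n - 1) := by
  cases n with
  | zero => simp
  | succ n => rw [hermite_succ, derivative_hermite_succ]; push_cast; ring

end Polynomial

theorem integrable_cexp_neg_sq_div_two_mul_pow (j : ℕ) :
    Integrable fun u : ℝ => cexp (-(u : ℂ) ^ 2 / 2) * (u : ℂ) ^ j := by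
  have hreal := integrable_rpow_mul_exp_neg_mul_sq (b := 1 / 2) (by norm_num)
    (s := j) (by linarith [(Nat.cast_nonneg j : (0 : ℝ) ≤ j)])
  simp only [Real.rpow_natCast] at hreal
  have hcast : (fun u : ℝ => cexp (-(u : ℂ) ^ 2 / 2) * (u : ℂ) ^ j) =
      fun u => ((u ^ j * Real.exp (-(1 / 2) * u ^ 2) : ℝ) : ℂ) := by
    ext u; push_cast; ring_nf
  exact hcast ▸ hreal.ofReal

theorem integrable_cexp_neg_sq_div_two_mul_eval (P : ℂ[X]) :
    Integrable fun u : ℝ => cexp (-(u : ℂ) ^ 2 / 2) * P.eval (u : ℂ) := by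
  induction P using Polynomial.induction_on' with
  | add p q hp hq =>
    simp only [eval_add, mul_add]
    exact hp.add hq
  | monomial j c =>
    simpa [mul_left_comm] using (integrable_cexp_neg_sq_div_two_mul_pow j).const_mul c

theorem integral_cexp_neg_sq_div_two :
    ∫ u : ℝ, cexp (-(u : ℂ) ^ 2 / 2) = (√(2 * Real.pi) : ℂ) := by
  calc ∫ u : ℝ, cexp (-(u : ℂ) ^ 2 / 2)
      = ∫ u : ℝ, ((Real.exp (-(1 / 2) * u ^ 2) : ℝ) : ℂ) := by
        congr 1 with u; push_cast; ring_nf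
    _ = (√(2 * Real.pi) : ℂ) := by
        rw [integral_complex_ofReal, integral_gaussian, div_div_eq_mul_div, div_one, mul_comm]

/-- The integrand is the derivative of `-exp (-u²/2) R(u)`. -/
theorem integral_cexp_neg_sq_div_two_mul_eval_X_mul_sub_derivative (R : ℂ[X]) :
    ∫ u : ℝ, cexp (-(u : ℂ) ^ 2 / 2) * (X * R - derivative R).eval (u : ℂ) = 0 := by
  have hderiv : ∀ u : ℝ, HasDerivAt (fun v : ℝ => cexp (-(v : ℂ) ^ 2 / 2) * R.eval (v : ℂ))
      (-(cexp (-(u : ℂ) ^ 2 / 2) * (X * R - derivative R).eval (u : ℂ))) u := by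
    intro u
    have hexp : HasDerivAt (fun v : ℂ => cexp (-v ^ 2 / 2)) (cexp (-(u : ℂ) ^ 2 / 2) * -u) u := by
      refine (((hasDerivAt_pow 2 (u : ℂ)).fun_neg.div_const 2).cexp).congr_deriv ?_
      norm_num; ring
    refine (hexp.fun_mul (R.hasDerivAt (u : ℂ))).comp_ofReal.congr_deriv ?_
    simp only [eval_sub, eval_mul, eval_X]
    ring
  have hint := integrable_cexp_neg_sq_div_two_mul_eval (X * R - derivative R)
  simpa [integral_neg] using
    integral_eq_zero_of_hasDerivAt_of_integrable hderiv hint.neg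
      (integrable_cexp_neg_sq_div_two_mul_eval R)

theorem integrable_cexp_neg_sq_div_two_mul_add_I_mul_pow (z : ℂ) (n : ℕ) :
    Integrable fun u : ℝ => cexp (-(u : ℂ) ^ 2 / 2) * (z + I * u) ^ n := by
  convert integrable_cexp_neg_sq_div_two_mul_eval ((C z + C I * X) ^ n) using 3
  simp only [eval_pow, eval_add, eval_mul, eval_C, eval_X]

/-- Integration by parts against `R = I (z + I X) ^ n`. -/
theorem integral_cexp_neg_sq_div_two_mul_add_I_mul_pow_succ (z : ℂ) (n : ℕ) :
    ∫ u : ℝ, cexp (-(u : ℂ) ^ 2 / 2) * (z + I * u) ^ (n + 1) =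
      z * (∫ u : ℝ, cexp (-(u : ℂ) ^ 2 / 2) * (z + I * u) ^ n)
        - n * ∫ u : ℝ, cexp (-(u : ℂ) ^ 2 / 2) * (z + I * u) ^ (n - 1) := by
  have hparts := integral_cexp_neg_sq_div_two_mul_eval_X_mul_sub_derivative
    (C I * (C z + C I * X) ^ n)
  have hpoint : ∀ u : ℝ, cexp (-(u : ℂ) ^ 2 / 2) *
      (X * (C I * (C z + C I * X) ^ n) - derivative (C I * (C z + C I * X) ^ n)).eval (u : ℂ) =
        cexp (-(u : ℂ) ^ 2 / 2) * (z + I * u) ^ (n + 1)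
          - z * (cexp (-(u : ℂ) ^ 2 / 2) * (z + I * u) ^ n)
          + n * (cexp (-(u : ℂ) ^ 2 / 2) * (z + I * u) ^ (n - 1)) := by
    intro u
    rw [derivative_C_mul, derivative_pow, derivative_add, derivative_C, zero_add,
      derivative_C_mul, derivative_X, mul_one]
    simp only [eval_sub, eval_mul, eval_add, eval_pow, eval_C, eval_X]
    rw [pow_succ (z + I * u) n]
    linear_combination (-(cexp (-(u : ℂ) ^ 2 / 2)) * n * (z + I * u) ^ (n - 1)) * I_sq
  have hint := integrable_cexp_neg_sq_div_two_mul_add_I_mul_pow z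
  have hint' : Integrable fun u : ℝ => cexp (-(u : ℂ) ^ 2 / 2) * (z + I * u) ^ (n + 1)
      - z * (cexp (-(u : ℂ) ^ 2 / 2) * (z + I * u) ^ n) := (hint _).sub ((hint _).const_mul _)
  rw [funext hpoint, integral_add hint' ((hint _).const_mul _),
    integral_sub (hint _) ((hint _).const_mul _), integral_const_mul, integral_const_mul]
    at hparts
  linear_combination hparts

theorem integral_cexp_neg_sq_div_two_mul_add_I_mul_pow (z : ℂ) (n : ℕ) :
    ∫ u : ℝ, cexp (-(u : ℂ) ^ 2 / 2) * (z + I * u) ^ n = √(2 * Real.pi) * aeval z (hermite n) := by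
  induction n using Nat.strong_induction_on with
  | _ n ih =>
    rcases n with _ | n
    · simp [integral_cexp_neg_sq_div_two]
    · have ih₁ := ih n (by omega)
      have ih₂ := ih (n - 1) (by omega)
      rw [integral_cexp_neg_sq_div_two_mul_add_I_mul_pow_succ, ih₁, ih₂,
        hermite_succ_eq_X_mul_sub_mul]
      simp only [map_sub, map_mul, aeval_X, map_natCast]
      ring

namespace Polynomial

variable {R : Type*} [Ring R]

noncomputable def monomialsToHermite (p : R[X]) : R[X] :=
  ∑ d ∈ range (p.natDegree + 1), C (p.coeff d) * (hermite d).map (Int.castRingHom R)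

theorem natDegree_monomialsToHermite_le (p : R[X]) :
    (monomialsToHermite p).natDegree ≤ p.natDegree := by
  refine natDegree_sum_le_of_forall_le _ _ fun d hd => (natDegree_C_mul_le _ _).trans ?_
  exact (natDegree_map_le.trans natDegree_hermite.le).trans (Nat.lt_succ_iff.mp (mem_range.mp hd))

theorem coeff_monomialsToHermite_natDegree (p : R[X]) :
    (monomialsToHermite p).coeff p.natDegree = p.leadingCoeff := by
  rw [monomialsToHermite, finsetSum_coeff, sum_eq_single_of_mem _ (self_mem_range_succ _)]
  · simp only [coeff_C_mul, coeff_map, coeff_hermite_self, map_one, mul_one]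
    rfl
  · intro d hd hne
    have hlt : d < p.natDegree := lt_of_le_of_ne (Nat.lt_succ_iff.mp (mem_range.mp hd)) hne
    simp [coeff_map, coeff_hermite_of_lt hlt]

theorem natDegree_monomialsToHermite (p : R[X]) :
    (monomialsToHermite p).natDegree = p.natDegree := by
  rcases eq_or_ne p 0 with rfl | hp
  · simp [monomialsToHermite]
  · refine natDegree_eq_of_le_of_coeff_ne_zero (natDegree_monomialsToHermite_le p) ?_
    rwa [coeff_monomialsToHermite_natDegree, Ne, leadingCoeff_eq_zero]

theorem leadingCoeff_monomialsToHermite (p : R[X]) :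
    (monomialsToHermite p).leadingCoeff = p.leadingCoeff := by
  rw [leadingCoeff, natDegree_monomialsToHermite, coeff_monomialsToHermite_natDegree]

theorem Monic.monomialsToHermite {p : R[X]} (hp : p.Monic) : (monomialsToHermite p).Monic :=
  (leadingCoeff_monomialsToHermite p).trans hp

end Polynomial

theorem cexp_neg_sq_div_two_mul_aeval_eq_sum (p : ℝ[X]) (z : ℂ) (u : ℝ) :
    cexp (-(u : ℂ) ^ 2 / 2) * aeval (z + I * u) p =
      ∑ d ∈ range (p.natDegree + 1), p.coeff d • (cexp (-(u : ℂ) ^ 2 / 2) * (z + I * u) ^ d) := by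
  rw [aeval_eq_sum_range, mul_sum]
  simp_rw [mul_smul_comm]

theorem integrable_cexp_neg_sq_div_two_mul_aeval (p : ℝ[X]) (z : ℂ) :
    Integrable fun u : ℝ => cexp (-(u : ℂ) ^ 2 / 2) * aeval (z + I * u) p := by
  simp_rw [cexp_neg_sq_div_two_mul_aeval_eq_sum]
  exact integrable_finsetSum _ fun d _ =>
    (integrable_cexp_neg_sq_div_two_mul_add_I_mul_pow z d).smul (p.coeff d)

theorem integral_cexp_neg_sq_div_two_mul_aeval (p : ℝ[X]) (z : ℂ) :
    ∫ u : ℝ, cexp (-(u : ℂ) ^ 2 / 2) * aeval (z + I * u) p =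
      √(2 * Real.pi) * aeval z (monomialsToHermite p) := by
  simp_rw [cexp_neg_sq_div_two_mul_aeval_eq_sum]
  have hint : ∀ d ∈ range (p.natDegree + 1), Integrable fun u : ℝ =>
      p.coeff d • (cexp (-(u : ℂ) ^ 2 / 2) * (z + I * u) ^ d) := fun d _ =>
    (integrable_cexp_neg_sq_div_two_mul_add_I_mul_pow z d).smul (p.coeff d)
  rw [integral_finsetSum _ hint]
  simp_rw [integral_smul, integral_cexp_neg_sq_div_two_mul_add_I_mul_pow, monomialsToHermite,
    map_sum, map_mul, aeval_C, ← algebraMap_int_eq, aeval_map_algebraMap, mul_sum]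
  refine sum_congr rfl fun d _ => ?_
  rw [Algebra.smul_def]
  ring

theorem stmt_0_general (m : ℕ) (a : Fin m → ℝ) (n : Fin m → ℕ) :
    (∀ x : ℝ, Integrable (fun u : ℝ =>
      Complex.exp (-(u : ℂ) ^ 2 / 2) *
        ∏ k, ((x : ℂ) - (a k : ℂ) + Complex.I * (u : ℂ)) ^ (n k))) ∧
    ∃ Q : Polynomial ℝ, Q.Monic ∧ Q.natDegree = ∑ k, n k ∧
      ∀ x : ℝ, ((Q.eval x : ℝ) : ℂ) =
        (Real.sqrt (2 * Real.pi) : ℂ)⁻¹ *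
          ∫ u : ℝ, Complex.exp (-(u : ℂ) ^ 2 / 2) *
            ∏ k, ((x : ℂ) - (a k : ℂ) + Complex.I * (u : ℂ)) ^ (n k) := by
  set S : ℝ[X] := ∏ k, (X - C (a k)) ^ n k
  have hmonic : ∀ k ∈ univ, ((X - C (a k)) ^ n k).Monic := fun k _ => (monic_X_sub_C _).pow _
  have hprod : ∀ x u : ℝ, ∏ k, ((x : ℂ) - (a k : ℂ) + I * (u : ℂ)) ^ (n k) =
      aeval ((x : ℂ) + I * u) S := by
    intro x u
    simp only [S, map_prod, map_pow, map_sub, aeval_X, aeval_C, Complex.coe_algebraMap]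
    exact prod_congr rfl fun k _ => by ring
  simp_rw [hprod]
  refine ⟨fun x => integrable_cexp_neg_sq_div_two_mul_aeval S x, monomialsToHermite S,
    (monic_prod_of_monic _ _ hmonic).monomialsToHermite, ?_, fun x => ?_⟩
  · simp [S, natDegree_monomialsToHermite, natDegree_prod_of_monic _ _ hmonic]
  · have hsqrt : (√(2 * Real.pi) : ℂ) ≠ 0 := by
      exact_mod_cast (Real.sqrt_pos.mpr (by positivity)).ne'
    rw [integral_cexp_neg_sq_div_two_mul_aeval, inv_mul_cancel_left₀ hsqrt]
    exact ofReal_eval (K := ℂ) _ x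

theorem stmt_0 (m : ℕ) (hm : 1 ≤ m) (a : Fin m → ℝ) (ha : Function.Injective a)
    (n : Fin m → ℕ) (hn : ∀ k, 1 ≤ n k) :
    (∀ x : ℝ, Integrable (fun u : ℝ =>
      Complex.exp (-(u : ℂ) ^ 2 / 2) *
        ∏ k, ((x : ℂ) - (a k : ℂ) + Complex.I * (u : ℂ)) ^ (n k))) ∧
    ∃ Q : Polynomial ℝ, Q.Monic ∧ Q.natDegree = ∑ k, n k ∧
      ∀ x : ℝ, ((Q.eval x : ℝ) : ℂ) =
        (Real.sqrt (2 * Real.pi) : ℂ)⁻¹ *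
          ∫ u : ℝ, Complex.exp (-(u : ℂ) ^ 2 / 2) *
            ∏ k, ((x : ℂ) - (a k : ℂ) + Complex.I * (u : ℂ)) ^ (n k) :=
  stmt_0_general m a n
end

section
/- For every k ∈ {1, …, m} and every integer j with 0 ≤ j ≤ n_k − 1, one has ∫_{x∈ℝ} P_{(n_1,…,n_m)}(x) · x^j · exp(−x²/2 + a_k x) dx = 0. -/
open MeasureTheory Finset

/-- The multiple Hermite function of type II (integral representation). -/
noncomputable def mhP {m : ℕ} (a : Fin m → ℝ) (ν : Fin m → ℕ) (x : ℝ) : ℂ :=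
  (Real.sqrt (2 * Real.pi) : ℂ)⁻¹ *
    ∫ u : ℝ, Complex.exp (-(u : ℂ) ^ 2 / 2) *
      ∏ k, ((x : ℂ) - (a k : ℂ) + Complex.I * (u : ℂ)) ^ (ν k)

open Polynomial ComplexConjugate
open scoped Complex Real

/-!
Substituting `x = Re z + a_k`, `u = Im z` turns the integral into `e^{a_k²/2}` times
`∫_ℂ e^{-|z|²/2} Q(z) (Re z + a_k)^j`, where `Q(z) = ∏_l (z + a_k - a_l)^{n_l}` is divisible
by `z^{n_k}`. Writing `Re z = (z + z̄)/2` expands `(Re z + a_k)^j` into terms `z̄^q R_q(z)`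
with `q ≤ j < n_k`, so everything reduces to monomials `z^p z̄^q` with `p > q`. Their integral
against any radial weight vanishes: rotating by `e^{iπ/(p-q)}` multiplies the integrand by `-1`.
-/

lemma pow_mul_conj_pow_circleExp_eq_neg_one {p q : ℕ} (hpq : p ≠ q) :
    (Circle.exp (π / (p - q)) : ℂ) ^ p * conj (Circle.exp (π / (p - q)) : ℂ) ^ q
      = -1 := by
  have hpq' : (p : ℂ) - q ≠ 0 := sub_ne_zero.mpr (by exact_mod_cast hpq)
  rw [Circle.coe_exp, ← Complex.exp_conj, ← Complex.exp_nat_mul, ← Complex.exp_nat_mul,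
    ← Complex.exp_add, ← Complex.exp_pi_mul_I]
  congr 1
  simp only [map_mul, Complex.conj_ofReal, Complex.conj_I]
  push_cast
  field_simp
  ring

theorem integral_radial_mul_pow_mul_conj_pow_eq_zero (f : ℝ → ℂ) {p q : ℕ} (hpq : p ≠ q) :
    ∫ z : ℂ, f ‖z‖ * (z ^ p * conj z ^ q) = 0 := by
  set c : Circle := Circle.exp (π / (p - q))
  have hrot : ∀ z : ℂ, f ‖c * z‖ * ((c * z) ^ p * conj (c * z) ^ q)
      = -(f ‖z‖ * (z ^ p * conj z ^ q)) := by
    intro z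
    rw [norm_mul, Circle.norm_coe, one_mul, ← neg_one_mul,
      ← pow_mul_conj_pow_circleExp_eq_neg_one hpq, map_mul]
    ring
  have h := (rotation c).measurePreserving.integral_comp
    (rotation c).toHomeomorph.measurableEmbedding fun z => f ‖z‖ * (z ^ p * conj z ^ q)
  simp only [rotation_apply, hrot, integral_neg] at h
  exact CharZero.eq_neg_self_iff.mp h.symm

lemma integrable_one_add_abs_pow_mul_exp_neg_sq_div_two (N : ℕ) :
    Integrable fun x : ℝ => (1 + |x|) ^ N * rexp (-x ^ 2 / 2) := by
  have hmono (i : ℕ) : Integrable fun x : ℝ => |x| ^ i * rexp (-x ^ 2 / 2) := by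
    have := (integrable_rpow_mul_exp_neg_mul_sq (b := 1 / 2) (by norm_num)
      (s := i) (by linarith [i.cast_nonneg (α := ℝ)])).norm
    simpa [abs_mul, Real.rpow_natCast, div_eq_inv_mul, mul_comm] using this
  have hexpand (x : ℝ) : (1 + |x|) ^ N * rexp (-x ^ 2 / 2)
      = ∑ i ∈ range (N + 1), (N.choose i : ℝ) * (|x| ^ i * rexp (-x ^ 2 / 2)) := by
    rw [add_comm, add_pow, sum_mul]
    exact sum_congr rfl fun i _ => by ring
  simp_rw [hexpand]
  exact integrable_finsetSum _ fun i _ => (hmono i).const_mul _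

lemma norm_cexp_neg_sq_norm_div_two (z : ℂ) :
    ‖cexp (-(‖z‖ : ℂ) ^ 2 / 2)‖ = rexp (-z.re ^ 2 / 2) * rexp (-z.im ^ 2 / 2) := by
  rw [Complex.norm_exp, ← Real.exp_add]
  congr 1
  have : ‖z‖ ^ 2 = z.re ^ 2 + z.im ^ 2 := by rw [Complex.sq_norm, Complex.normSq_apply]; ring
  norm_cast
  rw [this]; ring

theorem integrable_gaussian_mul_of_norm_le {g : ℂ → ℂ} (hg : Continuous g) {C : ℝ} {N : ℕ}
    (hgC : ∀ z, ‖g z‖ ≤ C * (1 + ‖z‖) ^ N) :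
    Integrable fun z : ℂ => cexp (-(‖z‖ : ℂ) ^ 2 / 2) * g z := by
  rw [← (Complex.volume_preserving_equiv_real_prod.symm).integrable_comp_emb
    Complex.measurableEquivRealProd.symm.measurableEmbedding, Measure.volume_eq_prod]
  have hdom := ((integrable_one_add_abs_pow_mul_exp_neg_sq_div_two N).const_mul C).mul_prod
    (integrable_one_add_abs_pow_mul_exp_neg_sq_div_two N)
  have hC : 0 ≤ C := nonneg_of_mul_nonneg_left ((norm_nonneg _).trans (hgC 0)) (by positivity)
  refine hdom.mono' (by fun_prop) (Filter.Eventually.of_forall fun ⟨x, u⟩ => ?_)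
  have hnorm : 1 + ‖(⟨x, u⟩ : ℂ)‖ ≤ (1 + |x|) * (1 + |u|) := by
    nlinarith [Complex.norm_le_abs_re_add_abs_im ⟨x, u⟩, abs_nonneg x, abs_nonneg u]
  simp only [Function.comp_apply, Complex.measurableEquivRealProd_symm_apply, norm_mul,
    norm_cexp_neg_sq_norm_div_two]
  calc rexp (-x ^ 2 / 2) * rexp (-u ^ 2 / 2) * ‖g ⟨x, u⟩‖
      ≤ rexp (-x ^ 2 / 2) * rexp (-u ^ 2 / 2) * (C * ((1 + |x|) * (1 + |u|)) ^ N) := by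
        gcongr
        exact (hgC _).trans (mul_le_mul_of_nonneg_left (by gcongr) hC)
    _ = _ := by rw [mul_pow]; ring

lemma Polynomial.norm_eval_le_mul_one_add_norm_pow {𝕜 : Type*} [NormedField 𝕜] (P : 𝕜[X])
    (z : 𝕜) :
    ‖P.eval z‖ ≤ (∑ i ∈ range (P.natDegree + 1), ‖P.coeff i‖) * (1 + ‖z‖) ^ P.natDegree := by
  rw [eval_eq_sum_range, sum_mul]
  refine (norm_sum_le _ _).trans (sum_le_sum fun i hi => ?_)
  have h1 : 1 ≤ 1 + ‖z‖ := le_add_of_nonneg_right (norm_nonneg z)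
  rw [norm_mul, norm_pow]
  gcongr
  calc ‖z‖ ^ i ≤ (1 + ‖z‖) ^ i := by gcongr; exact le_add_of_nonneg_left zero_le_one
    _ ≤ (1 + ‖z‖) ^ P.natDegree := pow_le_pow_right₀ h1 (Nat.lt_succ_iff.mp (mem_range.mp hi))

lemma integrable_gaussian_mul_eval_mul_conj_pow (P : ℂ[X]) (q : ℕ) :
    Integrable fun z : ℂ => cexp (-(‖z‖ : ℂ) ^ 2 / 2) * (P.eval z * conj z ^ q) := by
  refine integrable_gaussian_mul_of_norm_le (by fun_prop)
    (C := ∑ i ∈ range (P.natDegree + 1), ‖P.coeff i‖) (N := P.natDegree + q) fun z => ?_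
  rw [norm_mul, norm_pow, Complex.norm_conj, pow_add, ← mul_assoc]
  gcongr
  · exact P.norm_eval_le_mul_one_add_norm_pow z
  · exact le_add_of_nonneg_left zero_le_one

theorem integral_gaussian_mul_eval_mul_conj_pow_eq_zero {P : ℂ[X]} {q : ℕ}
    (hP : X ^ (q + 1) ∣ P) :
    ∫ z : ℂ, cexp (-(‖z‖ : ℂ) ^ 2 / 2) * (P.eval z * conj z ^ q) = 0 := by
  have hmonomial (i : ℕ) := integrable_gaussian_mul_eval_mul_conj_pow (X ^ i) q
  simp only [eval_pow, eval_X] at hmonomial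
  simp only [eval_eq_sum_range (p := P), sum_mul, mul_sum, mul_left_comm _ (P.coeff _),
    mul_assoc]
  rw [integral_finsetSum _ fun i _ => (hmonomial i).const_mul _]
  refine sum_eq_zero fun i _ => ?_
  rw [integral_const_mul]
  rcases le_or_gt i q with hiq | hqi
  · rw [X_pow_dvd_iff.mp hP i (Nat.lt_succ_of_le hiq), zero_mul]
  · rw [integral_radial_mul_pow_mul_conj_pow_eq_zero (fun r => cexp (-(r : ℂ) ^ 2 / 2))
      hqi.ne', mul_zero]

lemma eval_mul_re_add_pow_eq_sum (P : ℂ[X]) (A : ℂ) (j : ℕ) (z : ℂ) :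
    P.eval z * ((z.re : ℂ) + A) ^ j = ∑ q ∈ range (j + 1),
      (j.choose q * 2⁻¹ ^ q : ℂ) * ((P * (C 2⁻¹ * X + C A) ^ (j - q)).eval z * conj z ^ q) := by
  have hsplit : (z.re : ℂ) + A = 2⁻¹ * conj z + (2⁻¹ * z + A) := by
    rw [Complex.re_eq_add_conj]; ring
  rw [hsplit, add_pow, mul_sum]
  refine sum_congr rfl fun q _ => ?_
  simp only [eval_mul, eval_pow, eval_add, eval_C, eval_X, mul_pow]
  ring

theorem integrable_gaussian_mul_eval_mul_re_add_pow (P : ℂ[X]) (A : ℂ) (j : ℕ) :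
    Integrable fun z : ℂ => cexp (-(‖z‖ : ℂ) ^ 2 / 2) * (P.eval z * ((z.re : ℂ) + A) ^ j) := by
  simp_rw [eval_mul_re_add_pow_eq_sum, mul_sum, mul_left_comm (cexp _) ((_ : ℕ) * _ : ℂ)]
  exact integrable_finsetSum _ fun q _ =>
    (integrable_gaussian_mul_eval_mul_conj_pow _ q).const_mul _

theorem integral_gaussian_mul_eval_mul_re_add_pow_eq_zero {P : ℂ[X]} {n j : ℕ} (hP : X ^ n ∣ P)
    (hj : j < n) (A : ℂ) :
    ∫ z : ℂ, cexp (-(‖z‖ : ℂ) ^ 2 / 2) * (P.eval z * ((z.re : ℂ) + A) ^ j) = 0 := by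
  simp_rw [eval_mul_re_add_pow_eq_sum, mul_sum, mul_left_comm (cexp _) ((_ : ℕ) * _ : ℂ)]
  rw [integral_finsetSum _ fun q _ =>
    (integrable_gaussian_mul_eval_mul_conj_pow _ q).const_mul _]
  refine sum_eq_zero fun q hq => ?_
  have hqn : q + 1 ≤ n := by have := mem_range.mp hq; omega
  rw [integral_const_mul, integral_gaussian_mul_eval_mul_conj_pow_eq_zero
    ((pow_dvd_pow X hqn).trans (hP.mul_right _)), mul_zero]

theorem integral_integral_eq_integral_complex {E : Type*} [NormedAddCommGroup E]
    [NormedSpace ℝ E] {F : ℝ → ℝ → E} (hF : Integrable fun z : ℂ => F z.re z.im) :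
    ∫ x, ∫ u, F x u = ∫ z : ℂ, F z.re z.im := by
  have h := Complex.volume_preserving_equiv_real_prod
  have hemb := Complex.measurableEquivRealProd.measurableEmbedding
  have hint : Integrable (Function.uncurry F) (volume.prod volume) := by
    rw [← Measure.volume_eq_prod]
    exact (h.integrable_comp_emb hemb).mp hF
  rw [integral_integral hint, ← Measure.volume_eq_prod, ← h.integral_comp hemb]
  rfl

lemma cexp_mul_prod_mul_pow_mul_cexp_of_re_add {ι : Type*} [Fintype ι] (a : ι → ℝ)
    (n : ι → ℕ) (j : ℕ) (A : ℝ) (z : ℂ) :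
    cexp (-(z.im : ℂ) ^ 2 / 2) * ((∏ l, ((z.re : ℂ) + A - a l + Complex.I * z.im) ^ n l) *
      (((z.re : ℂ) + A) ^ j * cexp (-((z.re : ℂ) + A) ^ 2 / 2 + A * ((z.re : ℂ) + A))))
    = cexp ((A : ℂ) ^ 2 / 2) * (cexp (-(‖z‖ : ℂ) ^ 2 / 2) *
      ((∏ l, (X + C ((A : ℂ) - a l)) ^ n l).eval z * ((z.re : ℂ) + A) ^ j)) := by
  have hnorm : (‖z‖ : ℂ) ^ 2 = (z.re : ℂ) ^ 2 + (z.im : ℂ) ^ 2 := by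
    norm_cast; rw [Complex.sq_norm, Complex.normSq_apply]; ring
  have hfactor (l : ι) : (z.re : ℂ) + A - a l + Complex.I * z.im = z + ((A : ℂ) - a l) := by
    conv_rhs => rw [← Complex.re_add_im z]
    ring
  have hsquare :
      cexp (-(z.im : ℂ) ^ 2 / 2) * cexp (-((z.re : ℂ) + A) ^ 2 / 2 + A * ((z.re : ℂ) + A))
      = cexp ((A : ℂ) ^ 2 / 2) * cexp (-(‖z‖ : ℂ) ^ 2 / 2) := by
    rw [← Complex.exp_add, ← Complex.exp_add, hnorm]; ring_nf
  simp only [hfactor, eval_prod, eval_pow, eval_add, eval_X, eval_C]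
  linear_combination (∏ l, (z + ((A : ℂ) - a l)) ^ n l) * ((z.re : ℂ) + A) ^ j * hsquare

theorem stmt_1_general (m : ℕ) (a : Fin m → ℝ) (n : Fin m → ℕ) :
    ∀ k : Fin m, ∀ j : ℕ, j < n k →
      ∫ x : ℝ, mhP a n x * (x : ℂ) ^ j *
        Complex.exp (-(x : ℂ) ^ 2 / 2 + (a k : ℂ) * (x : ℂ)) = 0 := by
  intro k j hj
  set F : ℝ → ℝ → ℂ := fun x u => cexp (-(u : ℂ) ^ 2 / 2) *
    ((∏ l, ((x : ℂ) - a l + Complex.I * u) ^ n l) *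
      ((x : ℂ) ^ j * cexp (-(x : ℂ) ^ 2 / 2 + a k * x)))
  set P : ℂ[X] := ∏ l, (X + C ((a k : ℂ) - a l)) ^ n l
  have hshift (z : ℂ) : F (z + a k).re (z + a k).im = cexp ((a k : ℂ) ^ 2 / 2) *
      (cexp (-(‖z‖ : ℂ) ^ 2 / 2) * (P.eval z * ((z.re : ℂ) + a k) ^ j)) := by
    simpa only [F, Complex.add_re, Complex.add_im, Complex.ofReal_re, Complex.ofReal_im, add_zero,
      Complex.ofReal_add] using cexp_mul_prod_mul_pow_mul_cexp_of_re_add a n j (a k) z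
  have hP : X ^ n k ∣ P := by
    have := dvd_prod_of_mem (fun l => (X + C ((a k : ℂ) - a l)) ^ n l) (mem_univ k)
    rwa [sub_self, C_0, add_zero] at this
  have hF : Integrable fun z : ℂ => F z.re z.im := by
    have := ((integrable_gaussian_mul_eval_mul_re_add_pow P (a k) j).const_mul
      (cexp ((a k : ℂ) ^ 2 / 2))).comp_sub_right (a k : ℂ)
    simpa only [← hshift, sub_add_cancel] using this
  calc _ = (√(2 * π) : ℂ)⁻¹ * ∫ x, ∫ u, F x u := by
        simp only [mhP, F, mul_assoc, integral_const_mul, ← integral_mul_const]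
    _ = (√(2 * π) : ℂ)⁻¹ * ∫ z : ℂ, F (z + a k).re (z + a k).im := by
        rw [integral_integral_eq_integral_complex hF,
          integral_add_right_eq_self (fun z : ℂ => F z.re z.im)]
    _ = 0 := by
        simp only [hshift, integral_const_mul,
          integral_gaussian_mul_eval_mul_re_add_pow_eq_zero hP hj, mul_zero]

theorem stmt_1 (m : ℕ) (hm : 1 ≤ m) (a : Fin m → ℝ) (ha : Function.Injective a)
    (n : Fin m → ℕ) (hn : ∀ k, 1 ≤ n k) :
    ∀ k : Fin m, ∀ j : ℕ, j < n k →
      ∫ x : ℝ, mhP a n x * (x : ℂ) ^ j *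
        Complex.exp (-(x : ℂ) ^ 2 / 2 + (a k : ℂ) * (x : ℂ)) = 0 :=
  stmt_1_general m a n
end

section
/- For every k ∈ {1, …, m} and every real r with 0 < r < min_{l≠k} |a_k − a_l|, there exists a polynomial A_k with real coefficients of degree at most n_k − 1 such that for every x ∈ ℝ, (1/(√(2π)·2πi)) · ∮_{|t − a_k| = r} exp(−(t−x)²/2) · ∏_{l=1}^m (t − a_l)^{−n_l} dt = A_k(x) · exp(−x²/2 + a_k x), where the circle integral is taken counterclockwise over the circle of center a_k and radius r. -/
open MeasureTheory Finset Metric Complex Real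

/-!
Write the integrand as `exp(-x²/2) · exp(x t) g(t) / (t - a_k)^{n_k}`, where
`g(t) = exp(-t²/2) ∏_{l ≠ k} (t - a_l)^{-n_l}` (`gaussianCofactor`) is holomorphic on the closed
disc. Cauchy's formula for derivatives turns the integral into `2πi / (n_k - 1)!` times the
`(n_k - 1)`-th derivative of `exp(x t) g(t)` at `a_k`, and the Leibniz rule expands this as
`exp(a_k x)` times a polynomial in `x` of degree at most `n_k - 1` whose coefficients are derivatives
of `g` at `a_k`. These are real because `g` is real on the real axis.
-/

theorem im_iteratedDeriv_eq_zero_of_im_eq_zero {f : ℂ → ℂ} {U : Set ℂ} (hU : IsOpen U)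
    (hf : DifferentiableOn ℂ f U) (hreal : ∀ y : ℝ, (y : ℂ) ∈ U → (f y).im = 0) (i : ℕ) :
    ∀ y : ℝ, (y : ℂ) ∈ U → (iteratedDeriv i f y).im = 0 := by
  induction i with
  | zero => simpa using hreal
  | succ i ih =>
    intro y hy
    have hF : HasDerivAt (iteratedDeriv i f) (iteratedDeriv (i + 1) f y) y := by
      rw [iteratedDeriv_succ, iteratedDeriv_eq_iterate]
      exact ((hf.analyticOnNhd hU).iterated_deriv i y hy).differentiableAt.hasDerivAt
    have him : HasDerivAt (fun s : ℝ => (iteratedDeriv i f s).im)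
        (iteratedDeriv (i + 1) f y).im y :=
      imCLM.hasFDerivAt.comp_hasDerivAt y hF.comp_ofReal
    have hloc : (fun s : ℝ => (iteratedDeriv i f s).im) =ᶠ[nhds y] fun _ => 0 := by
      filter_upwards [continuous_ofReal.continuousAt.preimage_mem_nhds (hU.mem_nhds hy)]
        with s hs using ih s hs
    exact him.unique ((hasDerivAt_const y 0).congr_of_eventuallyEq hloc)

theorem iteratedDeriv_cexp_const_mul_mul {g : ℂ → ℂ} {z : ℂ} {N : ℕ} (hg : ContDiffAt ℂ N g z)
    (x : ℂ) :
    iteratedDeriv N (fun t => cexp (x * t) * g t) z =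
      cexp (x * z) * ∑ j ∈ range (N + 1), N.choose j * iteratedDeriv (N - j) g z * x ^ j := by
  rw [iteratedDeriv_fun_mul (f := fun t => cexp (x * t)) (by fun_prop) hg, mul_sum]
  simp only [iteratedDeriv_cexp_const_mul]
  exact sum_congr rfl fun j _ => by ring

section GaussianCofactor

variable {ι : Type*} [Fintype ι] [DecidableEq ι]

noncomputable def gaussianCofactor (a : ι → ℂ) (n : ι → ℕ) (k : ι) (t : ℂ) : ℂ :=
  cexp (-t ^ 2 / 2) * ∏ l ∈ univ.erase k, (t - a l) ^ (-(n l : ℤ))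

theorem differentiableOn_gaussianCofactor (a : ι → ℂ) (n : ι → ℕ) (k : ι) {s : Set ℂ}
    (hs : ∀ t ∈ s, ∀ l ≠ k, t ≠ a l) : DifferentiableOn ℂ (gaussianCofactor a n k) s := by
  intro t ht
  refine DifferentiableAt.differentiableWithinAt ?_
  unfold gaussianCofactor
  refine DifferentiableAt.mul (by fun_prop) (DifferentiableAt.fun_finsetProd fun l hl => ?_)
  exact (differentiableAt_id.sub_const _).zpow
    (Or.inl (sub_ne_zero.mpr (hs t ht l (ne_of_mem_erase hl))))

theorem im_gaussianCofactor_ofReal (a : ι → ℝ) (n : ι → ℕ) (k : ι) (y : ℝ) :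
    (gaussianCofactor (fun l => (a l : ℂ)) n k y).im = 0 := by
  have : gaussianCofactor (fun l => (a l : ℂ)) n k y =
      ((Real.exp (-y ^ 2 / 2) * ∏ l ∈ univ.erase k, (y - a l) ^ (-(n l : ℤ)) : ℝ) : ℂ) := by
    push_cast [gaussianCofactor, ofReal_exp]; rfl
  rw [this, ofReal_im]

theorem cexp_mul_prod_zpow_eq (a : ι → ℂ) (n : ι → ℕ) {k : ι} {N : ℕ} (hN : n k = N + 1)
    (x t : ℂ) :
    cexp (-(t - x) ^ 2 / 2) * ∏ l, (t - a l) ^ (-(n l : ℤ)) =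
      cexp (-x ^ 2 / 2) *
        ((1 / (t - a k) ^ (N + 1)) • (cexp (x * t) * gaussianCofactor a n k t)) := by
  have hexp : cexp (-(t - x) ^ 2 / 2) =
      cexp (-x ^ 2 / 2) * (cexp (x * t) * cexp (-t ^ 2 / 2)) := by
    rw [← Complex.exp_add, ← Complex.exp_add]; ring_nf
  rw [← mul_prod_erase univ _ (mem_univ k), hN, zpow_neg, zpow_natCast, gaussianCofactor,
    smul_eq_mul, hexp]
  ring

end GaussianCofactor

theorem ne_ofReal_of_mem_closedBall {c d r : ℝ} (hr : r < |c - d|) {t : ℂ}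
    (ht : t ∈ closedBall (c : ℂ) r) : t ≠ d := by
  rintro rfl
  rw [mem_closedBall, dist_comm, Complex.dist_eq, ← ofReal_sub, norm_real, Real.norm_eq_abs] at ht
  linarith

theorem stmt_3_general (m : ℕ) (a : Fin m → ℝ)
    (n : Fin m → ℕ) (hn : ∀ k, 1 ≤ n k)
    (k : Fin m) (r : ℝ) (hr : 0 < r) (hrk : ∀ l, l ≠ k → r < |a k - a l|) :
    ∃ A : Polynomial ℝ, A.natDegree ≤ n k - 1 ∧
      ∀ x : ℝ,
        ((Real.sqrt (2 * Real.pi) : ℂ) * (2 * Real.pi * Complex.I))⁻¹ *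
          (∮ t in C((a k : ℂ), r),
            Complex.exp (-(t - (x : ℂ)) ^ 2 / 2) *
              ∏ l, (t - (a l : ℂ)) ^ (-(n l : ℤ))) =
        ((A.eval x : ℝ) : ℂ) * Real.exp (-x ^ 2 / 2 + a k * x) := by
  set N := n k - 1
  have hN : n k = N + 1 := (Nat.succ_pred_eq_of_pos (hn k)).symm
  set g := gaussianCofactor (fun l => (a l : ℂ)) n k
  have hg : DifferentiableOn ℂ g (closedBall (a k : ℂ) r) :=
    differentiableOn_gaussianCofactor _ n k fun t ht l hl =>
      ne_ofReal_of_mem_closedBall (hrk l hl) ht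
  have hg_an : ContDiffAt ℂ N g (a k) := (hg.analyticAt (closedBall_mem_nhds _ hr)).contDiffAt
  obtain ⟨b, hb⟩ : ∃ b : ℕ → ℝ, ∀ i, iteratedDeriv i g (a k) = b i := by
    refine ⟨fun i => (iteratedDeriv i g (a k)).re, fun i => Complex.ext rfl ?_⟩
    exact im_iteratedDeriv_eq_zero_of_im_eq_zero isOpen_ball (hg.mono ball_subset_closedBall)
      (fun y _ => im_gaussianCofactor_ofReal a n k y) i (a k) (mem_ball_self hr)
  refine ⟨Polynomial.C ((√(2 * π))⁻¹ * (N.factorial : ℝ)⁻¹) *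
    ∑ j ∈ range (N + 1), Polynomial.C (N.choose j * b (N - j)) * Polynomial.X ^ j, ?_, fun x => ?_⟩
  · refine (Polynomial.natDegree_C_mul_le _ _).trans
      (Polynomial.natDegree_sum_le_of_forall_le _ _ ?_)
    exact fun j hj => (Polynomial.natDegree_C_mul_X_pow_le _ _).trans (mem_range_succ_iff.mp hj)
  calc _ = ((√(2 * π) : ℂ) * (2 * π * I))⁻¹ * (cexp (-x ^ 2 / 2) *
        ∮ t in C((a k : ℂ), r), (1 / (t - a k) ^ (N + 1)) • (cexp (x * t) * g t)) := by
        simp_rw [cexp_mul_prod_zpow_eq _ n hN, circleIntegral.integral_const_mul]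
        rfl
    _ = ((√(2 * π) : ℂ) * (2 * π * I))⁻¹ * (cexp (-x ^ 2 / 2) * ((2 * π * I / N.factorial) •
        (cexp (x * a k) * ∑ j ∈ range (N + 1), N.choose j * b (N - j) * x ^ j))) := by
        rw [(DifferentiableOn.fun_mul (by fun_prop) hg).circleIntegral_one_div_sub_center_pow_smul
          hr N, iteratedDeriv_cexp_const_mul_mul hg_an]
        push_cast [hb]
        rfl
    _ = _ := by
        have := two_pi_I_ne_zero
        simp only [Polynomial.eval_mul, Polynomial.eval_C, Polynomial.eval_finsetSum,
          Polynomial.eval_pow, Polynomial.eval_X]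
        push_cast [ofReal_exp, Complex.exp_add, smul_eq_mul]
        field_simp

theorem stmt_3 (m : ℕ) (hm : 1 ≤ m) (a : Fin m → ℝ) (ha : Function.Injective a)
    (n : Fin m → ℕ) (hn : ∀ k, 1 ≤ n k)
    (k : Fin m) (r : ℝ) (hr : 0 < r) (hrk : ∀ l, l ≠ k → r < |a k - a l|) :
    ∃ A : Polynomial ℝ, A.natDegree ≤ n k - 1 ∧
      ∀ x : ℝ,
        ((Real.sqrt (2 * Real.pi) : ℂ) * (2 * Real.pi * Complex.I))⁻¹ *
          (∮ t in C((a k : ℂ), r),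
            Complex.exp (-(t - (x : ℂ)) ^ 2 / 2) *
              ∏ l, (t - (a l : ℂ)) ^ (-(n l : ℤ))) =
        ((A.eval x : ℝ) : ℂ) * Real.exp (-x ^ 2 / 2 + a k * x) :=
  stmt_3_general m a n hn k r hr hrk
end

section
/- For every k ∈ {1, …, m}: ∫_{x∈ℝ} P_{(n_1,…,n_m)}(x) · x^{n_k} · exp(−x²/2 + a_k x) dx = n_k · ∫_{x∈ℝ} P_{(n_1,…,n_m)−e_k}(x) · x^{n_k−1} · exp(−x²/2 + a_k x) dx, where (n_1,…,n_m) − e_k denotes the multi-index obtained by decreasing the k-th entry by one. -/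
/-!
Write `P_ν(x) = (2π)^{-1/2} ∫ e^{-u²/2} Q(x + iu) du` with `Q = ∏ (X - a_j)^{ν_j}`. Gaussian
integration by parts, `∫ S'(x) e^{-x²/2 + cx} dx = ∫ (x - c) S(x) e^{-x²/2 + cx} dx` for polynomials
`S`, applied in `u` gives the lowering relation `P_n = (x - a_k) P_{n-e_k} - P_{n-e_k}'`. Taylor
expanding `Q(x + iu)` in `iu` shows that `P_{n-e_k}` is a polynomial in `x`, so the same integration
by parts, now in `x` against `x^{n_k} e^{-x²/2 + a_k x}`, turns the left-hand side into the
right-hand side.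
-/

open MeasureTheory Finset

open Polynomial Complex

lemma integrable_pow_mul_cexp_neg_sq_div_two_add (c : ℂ) (n : ℕ) :
    Integrable fun x : ℝ => (x : ℂ) ^ n * cexp (-(x : ℂ) ^ 2 / 2 + c * x) := by
  have hgauss : Integrable fun x : ℝ => x ^ n * Real.exp (-(1 / 4) * x ^ 2) := by
    simpa using integrable_rpow_mul_exp_neg_mul_sq (b := 1 / 4) (s := n) (by norm_num)
      (by linarith [n.cast_nonneg (α := ℝ)])
  have hmaj := hgauss.norm.const_mul (Real.exp (c.re ^ 2))
  refine hmaj.mono' (by fun_prop) (ae_of_all _ fun x => ?_)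
  have hexp : (-(x : ℂ) ^ 2 / 2 + c * x).re ≤ c.re ^ 2 + -(1 / 4) * x ^ 2 := by
    rw [← ofReal_pow]
    simp only [add_re, neg_re, div_ofNat_re, mul_re, ofReal_re, ofReal_im]
    nlinarith [sq_nonneg (x / 2 - c.re)]
  rw [norm_mul, norm_mul, norm_exp, Real.norm_of_nonneg (Real.exp_pos _).le, norm_pow,
    norm_real, norm_pow, ← mul_assoc, mul_comm (Real.exp _), mul_assoc, ← Real.exp_add]
  gcongr

lemma integrable_eval_mul_cexp_neg_sq_div_two_add (c : ℂ) (S : ℂ[X]) :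
    Integrable fun x : ℝ => S.eval (x : ℂ) * cexp (-(x : ℂ) ^ 2 / 2 + c * x) := by
  simp_rw [eval_eq_sum_range, Finset.sum_mul, mul_assoc]
  exact integrable_finsetSum _ fun i _ =>
    (integrable_pow_mul_cexp_neg_sq_div_two_add c i).const_mul _

noncomputable def gaussPairing (c : ℂ) : ℂ[X] →ₗ[ℂ] ℂ where
  toFun S := ∫ x : ℝ, S.eval (x : ℂ) * cexp (-(x : ℂ) ^ 2 / 2 + c * x)
  map_add' S T := by
    simp only [eval_add, add_mul]
    exact integral_add (integrable_eval_mul_cexp_neg_sq_div_two_add c S)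
      (integrable_eval_mul_cexp_neg_sq_div_two_add c T)
  map_smul' z S := by
    simp only [eval_smul, smul_eq_mul, mul_assoc, RingHom.id_apply]
    exact integral_const_mul z _

lemma gaussPairing_apply (c : ℂ) (S : ℂ[X]) :
    gaussPairing c S = ∫ x : ℝ, S.eval (x : ℂ) * cexp (-(x : ℂ) ^ 2 / 2 + c * x) := rfl

lemma gaussPairing_derivative (c : ℂ) (S : ℂ[X]) :
    gaussPairing c (derivative S) = gaussPairing c ((X - C c) * S) := by
  have hw : ∀ x : ℝ, HasDerivAt (fun y : ℝ => cexp (-(y : ℂ) ^ 2 / 2 + c * y))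
      (-((x : ℂ) - c) * cexp (-(x : ℂ) ^ 2 / 2 + c * x)) x := by
    intro x
    have h : HasDerivAt (fun z : ℂ => cexp (-z ^ 2 / 2 + c * z))
        (cexp (-(x : ℂ) ^ 2 / 2 + c * x) * (-(x : ℂ) + c)) x := by
      have hq : HasDerivAt (fun z : ℂ => -z ^ 2 / 2 + c * z) (-(x : ℂ) + c) x :=
        (((hasDerivAt_pow 2 (x : ℂ)).neg.div_const 2).add
          ((hasDerivAt_id (x : ℂ)).const_mul c)).congr_deriv (by push_cast; ring)
      exact hq.cexp
    convert h.comp_ofReal using 1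
    ring
  have hibp := integral_mul_deriv_eq_deriv_mul_of_integrable
    (u := fun x : ℝ => S.eval (x : ℂ)) (u' := fun x : ℝ => (derivative S).eval (x : ℂ))
    (fun x _ => (S.hasDerivAt (x : ℂ)).comp_ofReal) (fun x _ => hw x) ?_
    (integrable_eval_mul_cexp_neg_sq_div_two_add c _)
    (integrable_eval_mul_cexp_neg_sq_div_two_add c _)
  · simp only [gaussPairing_apply, eval_mul, eval_sub, eval_X, eval_C]
    have hneg : ∫ x : ℝ, S.eval (x : ℂ) * (-((x : ℂ) - c) * cexp (-(x : ℂ) ^ 2 / 2 + c * x)) =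
        -∫ x : ℝ, ((x : ℂ) - c) * S.eval (x : ℂ) * cexp (-(x : ℂ) ^ 2 / 2 + c * x) := by
      rw [← integral_neg]
      congr 1 with x
      ring
    linear_combination hibp - hneg
  · refine (integrable_eval_mul_cexp_neg_sq_div_two_add c (-((X - C c) * S))).congr
      (ae_of_all _ fun x => ?_)
    simp only [eval_neg, eval_mul, eval_sub, eval_X, eval_C, Pi.mul_apply]
    ring

lemma gaussPairing_C_mul (c z : ℂ) (S : ℂ[X]) :
    gaussPairing c (C z * S) = z * gaussPairing c S := by
  rw [← smul_eq_C_mul, map_smul, smul_eq_mul]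

noncomputable def hermiteTransform (Q : ℂ[X]) (x : ℝ) : ℂ :=
  gaussPairing 0 (Q.comp (C (x : ℂ) + C I * X))

lemma hermiteTransform_X_sub_C_mul (c : ℂ) (Q : ℂ[X]) (x : ℝ) :
    hermiteTransform ((X - C c) * Q) x =
      (x - c) * hermiteTransform Q x - hermiteTransform (derivative Q) x := by
  set q : ℂ[X] := C (x : ℂ) + C I * X
  have hibp := gaussPairing_derivative 0 (Q.comp q)
  rw [derivative_comp, derivative_add, derivative_C, derivative_C_mul_X, zero_add, C_0, sub_zero,
    gaussPairing_C_mul] at hibp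
  have hsplit : ((X - C c) * Q).comp q = C ((x : ℂ) - c) * Q.comp q + C I * (X * Q.comp q) := by
    simp only [q, mul_comp, sub_comp, X_comp, C_comp, C_sub]
    ring
  change gaussPairing 0 (((X - C c) * Q).comp q) =
    (x - c) * gaussPairing 0 (Q.comp q) - gaussPairing 0 ((derivative Q).comp q)
  rw [hsplit, map_add, gaussPairing_C_mul, gaussPairing_C_mul, ← hibp]
  linear_combination (gaussPairing 0 ((derivative Q).comp q)) * I_mul_I

/-- Integrates the Taylor expansion `Q(x + iu) = ∑ₙ (hasseDeriv n Q)(x) (iu)ⁿ` termwise against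
the Gaussian, truncated at `N`; it represents `hermiteTransform Q` once `natDegree Q < N`. -/
noncomputable def hermitePoly (N : ℕ) : ℂ[X] →ₗ[ℂ] ℂ[X] :=
  ∑ n ∈ range N, (I ^ n * gaussPairing 0 (X ^ n)) • hasseDeriv n

lemma hermiteTransform_eq_eval_hermitePoly {N : ℕ} {Q : ℂ[X]} (hN : Q.natDegree < N) (x : ℝ) :
    hermiteTransform Q x = (hermitePoly N Q).eval (x : ℂ) := by
  have htaylor : Q.comp (C (x : ℂ) + C I * X) =
      ∑ n ∈ range N, C ((hasseDeriv n Q).eval (x : ℂ) * I ^ n) * X ^ n := by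
    have hQ : Q.comp (C (x : ℂ) + C I * X) = (taylor (x : ℂ) Q).comp (C I * X) := by
      rw [taylor_apply, comp_assoc, add_comp, X_comp, C_comp, add_comm]
    rw [hQ, as_sum_range_C_mul_X_pow' (taylor (x : ℂ) Q) (by rwa [natDegree_taylor]),
      Polynomial.sum_comp]
    refine Finset.sum_congr rfl fun n _ => ?_
    rw [mul_comp, C_comp, X_pow_comp, taylor_coeff, mul_pow, ← C_pow, C_mul]
    ring
  rw [hermiteTransform, htaylor, map_sum, hermitePoly, LinearMap.sum_apply, eval_finsetSum]
  refine Finset.sum_congr rfl fun n _ => ?_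
  rw [gaussPairing_C_mul, LinearMap.smul_apply, eval_smul, smul_eq_mul]
  ring

lemma derivative_hasseDeriv {R : Type*} [Semiring R] (n : ℕ) (p : R[X]) :
    derivative (hasseDeriv n p) = hasseDeriv n (derivative p) := by
  have h1 := LinearMap.congr_fun (hasseDeriv_comp (R := R) 1 n) p
  have h2 := LinearMap.congr_fun (hasseDeriv_comp (R := R) n 1) p
  simp only [LinearMap.comp_apply, hasseDeriv_one, LinearMap.smul_apply] at h1 h2
  rw [h1, h2, add_comm, Nat.choose_one_right, Nat.choose_succ_self_right]

lemma derivative_hermitePoly (N : ℕ) (Q : ℂ[X]) :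
    derivative (hermitePoly N Q) = hermitePoly N (derivative Q) := by
  simp only [hermitePoly, LinearMap.sum_apply, LinearMap.smul_apply, derivative_sum,
    derivative_smul, derivative_hasseDeriv]

lemma prod_pow_eq_mul_prod_pow_update {ι M : Type*} [Fintype ι] [DecidableEq ι] [CommMonoid M]
    (f : ι → M) (n : ι → ℕ) {k : ι} (hk : 1 ≤ n k) :
    ∏ j, f j ^ n j = f k * ∏ j, f j ^ Function.update n k (n k - 1) j := by
  have herase : ∏ j ∈ univ.erase k, f j ^ Function.update n k (n k - 1) j =
      ∏ j ∈ univ.erase k, f j ^ n j :=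
    Finset.prod_congr rfl fun j hj => by rw [Function.update_of_ne (Finset.ne_of_mem_erase hj)]
  rw [← Finset.mul_prod_erase _ _ (Finset.mem_univ k),
    ← Finset.mul_prod_erase _ _ (Finset.mem_univ k), Function.update_self, herase,
    ← mul_assoc, ← pow_succ', Nat.sub_add_cancel hk]

lemma mhP_eq_hermiteTransform {m : ℕ} (a : Fin m → ℝ) (ν : Fin m → ℕ) (x : ℝ) :
    mhP a ν x = (Real.sqrt (2 * Real.pi) : ℂ)⁻¹ *
      hermiteTransform (∏ j, (X - C (a j : ℂ)) ^ ν j) x := by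
  rw [mhP, hermiteTransform, gaussPairing_apply]
  congr 2 with u
  simp only [eval_comp, eval_prod, eval_pow, eval_sub, eval_add, eval_mul, eval_X, eval_C,
    zero_mul, add_zero]
  ring_nf

lemma integral_mul_pow_mul_cexp_eq_gaussPairing {f : ℝ → ℂ} {κ : ℂ} {S : ℂ[X]}
    (hf : ∀ x : ℝ, f x = κ * S.eval (x : ℂ)) (c : ℂ) (p : ℕ) :
    ∫ x : ℝ, f x * (x : ℂ) ^ p * cexp (-(x : ℂ) ^ 2 / 2 + c * x) =
      κ * gaussPairing c (S * X ^ p) := by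
  rw [gaussPairing_apply, ← integral_const_mul]
  congr 1 with x
  rw [hf, eval_mul, eval_X_pow]
  ring

theorem stmt_7_general (m : ℕ) (a : Fin m → ℝ)
    (n : Fin m → ℕ) (hn : ∀ k, 1 ≤ n k) :
    ∀ k : Fin m,
      ∫ x : ℝ, mhP a n x * (x : ℂ) ^ (n k) *
        Complex.exp (-(x : ℂ) ^ 2 / 2 + (a k : ℂ) * (x : ℂ)) =
      (n k : ℂ) *
        ∫ x : ℝ, mhP a (Function.update n k (n k - 1)) x * (x : ℂ) ^ (n k - 1) *
          Complex.exp (-(x : ℂ) ^ 2 / 2 + (a k : ℂ) * (x : ℂ)) := by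
  intro k
  set R : ℂ[X] := ∏ j, (X - C (a j : ℂ)) ^ Function.update n k (n k - 1) j
  set A := hermitePoly (R.natDegree + 1) R
  have hA (x : ℝ) : hermiteTransform R x = A.eval (x : ℂ) :=
    hermiteTransform_eq_eval_hermitePoly (lt_add_one _) x
  have hA' (x : ℝ) : hermiteTransform (derivative R) x = (derivative A).eval (x : ℂ) := by
    rw [derivative_hermitePoly]
    exact hermiteTransform_eq_eval_hermitePoly ((natDegree_derivative_le R).trans_lt (by omega)) x
  have hlower (x : ℝ) : mhP a (Function.update n k (n k - 1)) x =
      (Real.sqrt (2 * Real.pi) : ℂ)⁻¹ * A.eval (x : ℂ) := by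
    rw [mhP_eq_hermiteTransform, hA]
  have hupper (x : ℝ) : mhP a n x =
      (Real.sqrt (2 * Real.pi) : ℂ)⁻¹ * ((X - C (a k : ℂ)) * A - derivative A).eval (x : ℂ) := by
    rw [mhP_eq_hermiteTransform, prod_pow_eq_mul_prod_pow_update _ _ (hn k),
      hermiteTransform_X_sub_C_mul, hA, hA', eval_sub, eval_mul, eval_sub, eval_X, eval_C]
  have hibp := gaussPairing_derivative (a k) (A * X ^ n k)
  rw [derivative_mul, derivative_X_pow, mul_left_comm, map_add, gaussPairing_C_mul] at hibp
  rw [integral_mul_pow_mul_cexp_eq_gaussPairing hupper,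
    integral_mul_pow_mul_cexp_eq_gaussPairing hlower, sub_mul, mul_assoc, map_sub, ← hibp]
  ring

theorem stmt_7 (m : ℕ) (hm : 1 ≤ m) (a : Fin m → ℝ) (ha : Function.Injective a)
    (n : Fin m → ℕ) (hn : ∀ k, 1 ≤ n k) :
    ∀ k : Fin m,
      ∫ x : ℝ, mhP a n x * (x : ℂ) ^ (n k) *
        Complex.exp (-(x : ℂ) ^ 2 / 2 + (a k : ℂ) * (x : ℂ)) =
      (n k : ℂ) *
        ∫ x : ℝ, mhP a (Function.update n k (n k - 1)) x * (x : ℂ) ^ (n k - 1) *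
          Complex.exp (-(x : ℂ) ^ 2 / 2 + (a k : ℂ) * (x : ℂ)) :=
  stmt_7_general m a n hn
end

section
/- Let σ, c ∈ ℝ and R > 0 satisfy |a_l − c| < R for all l and |σ − c| > R, and define K(x,y) = (1/(2πi)²) ∫_{u∈ℝ} ( ∮_{|t−c|=R} exp((σ+iu−x)²/2 − (t−y)²/2) · ∏_{k=1}^m ((σ+iu−a_k)/(t−a_k))^{n_k} · (σ+iu−t)^{−1} dt ) · i du. Then for all x, y ∈ ℝ, the partial derivatives of K exist and ∂K/∂x (x,y) + ∂K/∂y (x,y) = (x − y)·K(x,y) − P_{(n_1,…,n_m)}(x)·Q_{(n_1,…,n_m)}(y). -/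
open MeasureTheory Finset

/-- The multiple Hermite linear form of type I (integral representation),
with contour a counterclockwise circle of center `c` and radius `R`. -/
noncomputable def mhQ {m : ℕ} (a : Fin m → ℝ) (c R : ℝ) (ν : Fin m → ℕ) (y : ℝ) : ℂ :=
  ((Real.sqrt (2 * Real.pi) : ℂ) * (2 * Real.pi * Complex.I))⁻¹ *
    ∮ t in C((c : ℂ), R),
      Complex.exp (-(t - (y : ℂ)) ^ 2 / 2) * ∏ l, (t - (a l : ℂ)) ^ (-(ν l : ℤ))

/-- The Brézin–Hikami kernel, with the vertical line `Re = σ` (parametrized by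
`s = σ + i u`, `ds = i du`) and a counterclockwise circle of center `c`, radius `R`. -/
noncomputable def mhK {m : ℕ} (a : Fin m → ℝ) (n : Fin m → ℕ) (σ c R : ℝ) (x y : ℝ) : ℂ :=
  ((2 * Real.pi * Complex.I) ^ 2)⁻¹ *
    ∫ u : ℝ,
      (∮ t in C((c : ℂ), R),
        Complex.exp (((σ : ℂ) + Complex.I * u - x) ^ 2 / 2 - (t - (y : ℂ)) ^ 2 / 2) *
          (∏ k, (((σ : ℂ) + Complex.I * u - a k) / (t - (a k : ℂ))) ^ (n k)) *
          ((σ : ℂ) + Complex.I * u - t)⁻¹) * Complex.I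

/-!
Write `s = σ + iu` and `t = c + Re^{iθ}`. Then `K` is the integral over `(u, θ) ∈ ℝ × (0, 2π]` of
`A(x, s) B(y, t) / (s - t)`, where `A(x, s) = e^{(s-x)²/2} ∏ (s - a_k)^{n_k}` and
`B(y, t) dt = e^{-(t-y)²/2} ∏ (t - a_k)^{-n_k} dt`. Differentiating under the integral sign
multiplies the integrand by `x - s`, resp. `t - y`, and `(x - s) + (t - y) = (x - y) - (s - t)`
cancels the pole: `∂ₓK + ∂_yK = (x - y) K - (∫ A du) (∮ B dt)` by Fubini. The `u`-integral of the
entire, Gaussian-decaying `A` does not depend on the abscissa `σ`, so moving the line to `Re s = x`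
gives `√(2π) P(x)`, while `∮ B dt = √(2π) 2πi Q(y)`. Domination holds because
`|A| ≲ (1 + |u|)^d e^{-u²/2}`, `B` is bounded as the `a_k` lie inside the circle, and
`|s - t| ≥ |σ - c| - R`.
-/

open Complex Filter Set Polynomial

noncomputable section

namespace MultipleHermite

theorem hasDerivAt_integral_of_norm_le_mul {α E : Type*} [MeasurableSpace α] {μ : Measure α}
    [NormedAddCommGroup E] [NormedSpace ℝ E] {F F' : ℝ → α → E} {C : ℝ → ℝ} {g : α → ℝ}
    {x₀ : ℝ} (hF_meas : ∀ x, AEStronglyMeasurable (F x) μ) (hF_int : Integrable (F x₀) μ)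
    (hF'_meas : AEStronglyMeasurable (F' x₀) μ) (hC : Continuous C) (hg : Integrable g μ)
    (h_bound : ∀ x a, ‖F' x a‖ ≤ C x * g a) (h_diff : ∀ x a, HasDerivAt (F · a) (F' x a) x) :
    Integrable (F' x₀) μ ∧ HasDerivAt (fun x => ∫ a, F x a ∂μ) (∫ a, F' x₀ a ∂μ) x₀ := by
  obtain ⟨M, hM⟩ := (isCompact_closedBall x₀ 1).exists_bound_of_continuousOn hC.continuousOn
  refine hasDerivAt_integral_of_dominated_loc_of_deriv_le (bound := fun a => M * |g a|)
    (Metric.ball_mem_nhds x₀ one_pos) (Eventually.of_forall hF_meas) hF_int hF'_meas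
    (Eventually.of_forall fun a x hx => ?_) (hg.abs.const_mul M)
    (Eventually.of_forall fun a x _ => h_diff x a)
  calc ‖F' x a‖ ≤ C x * g a := h_bound x a
    _ ≤ ‖C x‖ * |g a| := by rw [Real.norm_eq_abs, ← abs_mul]; exact le_abs_self _
    _ ≤ M * |g a| := by gcongr; exact hM x (Metric.ball_subset_closedBall hx)

def gaussBound (d : ℕ) (u : ℝ) : ℝ := (1 + |u|) ^ d * Real.exp (-u ^ 2 / 2)

lemma gaussBound_nonneg (d : ℕ) (u : ℝ) : 0 ≤ gaussBound d u := by
  unfold gaussBound; positivity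

lemma gaussBound_succ (d : ℕ) (u : ℝ) : gaussBound (d + 1) u = (1 + |u|) * gaussBound d u := by
  rw [gaussBound, gaussBound, pow_succ]; ring

lemma integrable_gaussBound (d : ℕ) : Integrable (gaussBound d) := by
  have hexp : Integrable fun u : ℝ => Real.exp (-u ^ 2 / 2) := by
    simpa [div_eq_inv_mul] using integrable_exp_neg_mul_sq (b := 1 / 2) (by norm_num)
  have hpow : Integrable fun u : ℝ => |u| ^ d * Real.exp (-u ^ 2 / 2) := by
    have := (integrable_rpow_mul_exp_neg_mul_sq (b := 1 / 2) (by norm_num) (s := d)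
      (by linarith [(Nat.cast_nonneg d : (0 : ℝ) ≤ d)])).norm
    refine this.congr (Eventually.of_forall fun u => ?_)
    simp [Real.rpow_natCast, abs_of_pos (Real.exp_pos _), div_eq_inv_mul]
  refine ((hexp.add hpow).const_mul (2 ^ (d - 1))).mono' (by unfold gaussBound; fun_prop)
    (Eventually.of_forall fun u => ?_)
  rw [Real.norm_of_nonneg (gaussBound_nonneg d u), gaussBound]
  calc (1 + |u|) ^ d * Real.exp (-u ^ 2 / 2)
      ≤ 2 ^ (d - 1) * (1 ^ d + |u| ^ d) * Real.exp (-u ^ 2 / 2) := by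
        gcongr; exact add_pow_le zero_le_one (abs_nonneg u) d
    _ = _ := by simp only [Pi.add_apply, one_pow]; ring

def coeffNormSum (P : ℂ[X]) : ℝ := ∑ i ∈ range (P.natDegree + 1), ‖P.coeff i‖

lemma norm_eval_le (P : ℂ[X]) (z : ℂ) :
    ‖P.eval z‖ ≤ coeffNormSum P * (1 + ‖z‖) ^ P.natDegree := by
  rw [eval_eq_sum_range, coeffNormSum, Finset.sum_mul]
  refine (norm_sum_le _ _).trans (Finset.sum_le_sum fun i hi => ?_)
  rw [norm_mul, norm_pow]
  gcongr
  calc ‖z‖ ^ i ≤ (1 + ‖z‖) ^ i := by gcongr; linarith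
    _ ≤ (1 + ‖z‖) ^ P.natDegree :=
      pow_le_pow_right₀ (by linarith [norm_nonneg z]) (Nat.lt_succ_iff.mp (mem_range.mp hi))

def gaussPoly (P : ℂ[X]) (w : ℝ) (z : ℂ) : ℂ := P.eval z * cexp ((z - w) ^ 2 / 2)

def gaussDerivPoly (P : ℂ[X]) (w : ℝ) : ℂ[X] := derivative P + P * (X - C (w : ℂ))

lemma hasDerivAt_gaussPoly (P : ℂ[X]) (w : ℝ) (z : ℂ) :
    HasDerivAt (gaussPoly P w) (gaussPoly (gaussDerivPoly P w) w z) z := by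
  have hexp :
      HasDerivAt (fun z => cexp ((z - w) ^ 2 / 2)) (cexp ((z - w) ^ 2 / 2) * (z - w)) z := by
    simpa using ((((hasDerivAt_id z).sub_const (w : ℂ)).pow 2).div_const 2).cexp
  refine ((P.hasDerivAt z).mul hexp).congr_deriv ?_
  simp only [gaussPoly, gaussDerivPoly, eval_add, eval_mul, eval_sub, eval_X, eval_C]
  ring

lemma hasDerivAt_gaussPoly_re (P : ℂ[X]) (w r u : ℝ) :
    HasDerivAt (fun r : ℝ => gaussPoly P w (r + I * u))
      (gaussPoly (gaussDerivPoly P w) w (r + I * u)) r := by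
  have := (hasDerivAt_gaussPoly P w (r + I * u)).comp (r : ℂ) ((hasDerivAt_id _).add_const (I * u))
  simpa using this.comp_ofReal

lemma hasDerivAt_gaussPoly_im (P : ℂ[X]) (w r u : ℝ) :
    HasDerivAt (fun u : ℝ => gaussPoly P w (r + I * u))
      (gaussPoly (gaussDerivPoly P w) w (r + I * u) * I) u := by
  have := (hasDerivAt_gaussPoly P w (r + I * u)).comp (u : ℂ)
    (((hasDerivAt_id _).const_mul I).const_add (r : ℂ))
  simpa using this.comp_ofReal

lemma norm_cexp_vertical (r w u : ℝ) :
    ‖cexp (((r : ℂ) + I * u - w) ^ 2 / 2)‖ =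
      Real.exp ((r - w) ^ 2 / 2) * Real.exp (-u ^ 2 / 2) := by
  rw [norm_exp, ← Real.exp_add]
  congr 1
  have : ((r : ℂ) + I * u - w) ^ 2 / 2 =
      (((r - w) ^ 2 - u ^ 2) / 2 : ℝ) + ((r - w) * u : ℝ) * I := by
    push_cast
    ring_nf
    rw [I_sq]
    ring
  rw [this, add_re, ofReal_re, re_ofReal_mul, I_re, mul_zero, add_zero]
  ring

lemma norm_gaussPoly_vertical_le (P : ℂ[X]) (w r u : ℝ) :
    ‖gaussPoly P w (r + I * u)‖ ≤ coeffNormSum P * (1 + |r|) ^ P.natDegree *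
      Real.exp ((r - w) ^ 2 / 2) * gaussBound P.natDegree u := by
  have hz : 1 + ‖(r : ℂ) + I * u‖ ≤ (1 + |r|) * (1 + |u|) := by
    have : ‖(r : ℂ) + I * u‖ ≤ |r| + |u| := by
      simpa [norm_real] using norm_add_le (r : ℂ) (I * u)
    nlinarith [abs_nonneg r, abs_nonneg u]
  have hcoeff : 0 ≤ coeffNormSum P := Finset.sum_nonneg fun _ _ => norm_nonneg _
  rw [gaussPoly, norm_mul, norm_cexp_vertical]
  calc ‖P.eval ((r : ℂ) + I * u)‖ * (Real.exp ((r - w) ^ 2 / 2) * Real.exp (-u ^ 2 / 2))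
      ≤ coeffNormSum P * ((1 + |r|) * (1 + |u|)) ^ P.natDegree *
          (Real.exp ((r - w) ^ 2 / 2) * Real.exp (-u ^ 2 / 2)) := by
        gcongr
        exact (norm_eval_le P _).trans (by gcongr)
    _ = _ := by rw [gaussBound, mul_pow]; ring

lemma continuous_gaussPoly_vertical (P : ℂ[X]) (w r : ℝ) :
    Continuous fun u : ℝ => gaussPoly P w (r + I * u) := by
  unfold gaussPoly; fun_prop

lemma integrable_gaussPoly_vertical (P : ℂ[X]) (w r : ℝ) :
    Integrable fun u : ℝ => gaussPoly P w (r + I * u) :=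
  ((integrable_gaussBound _).const_mul _).mono'
    (continuous_gaussPoly_vertical P w r).aestronglyMeasurable
    (Eventually.of_forall (norm_gaussPoly_vertical_le P w r))

lemma integral_gaussDerivPoly_vertical (P : ℂ[X]) (w r : ℝ) :
    ∫ u : ℝ, gaussPoly (gaussDerivPoly P w) w (r + I * u) = 0 := by
  have := integral_eq_zero_of_hasDerivAt_of_integrable (hasDerivAt_gaussPoly_im P w r)
    ((integrable_gaussPoly_vertical _ w r).mul_const I) (integrable_gaussPoly_vertical P w r)
  rwa [integral_mul_const, mul_eq_zero, or_iff_left I_ne_zero] at this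

/-- By holomorphy the derivative of the line integral in the abscissa `r` is `-i` times the
integral of a `u`-derivative, which vanishes by the Gaussian decay. -/
lemma integral_gaussPoly_vertical_eq (P : ℂ[X]) (w r₁ r₂ : ℝ) :
    ∫ u : ℝ, gaussPoly P w (r₁ + I * u) = ∫ u : ℝ, gaussPoly P w (r₂ + I * u) := by
  have hderiv (r : ℝ) : HasDerivAt (fun r : ℝ => ∫ u : ℝ, gaussPoly P w (r + I * u)) 0 r := by
    have := (hasDerivAt_integral_of_norm_le_mul
      (fun r => (continuous_gaussPoly_vertical P w r).aestronglyMeasurable)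
      (integrable_gaussPoly_vertical P w r)
      (continuous_gaussPoly_vertical _ w r).aestronglyMeasurable
      (by fun_prop) (integrable_gaussBound _)
      (norm_gaussPoly_vertical_le (gaussDerivPoly P w) w)
      (fun r u => hasDerivAt_gaussPoly_re P w r u)).2
    rwa [integral_gaussDerivPoly_vertical] at this
  exact is_const_of_deriv_eq_zero (fun r => (hderiv r).differentiableAt)
    (fun r => (hderiv r).deriv) r₁ r₂

lemma abs_norm_sub_sub_le_norm_circleMap_sub {R : ℝ} (hR : 0 ≤ R) (c w : ℂ) (θ : ℝ) :
    |‖w - c‖ - R| ≤ ‖circleMap c R θ - w‖ := by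
  have := abs_norm_sub_norm_le (circleMap c R θ - c) (w - c)
  rwa [sub_sub_sub_cancel_right, circleMap_sub_center, norm_circleMap_zero, abs_of_nonneg hR,
    abs_sub_comm] at this

lemma norm_circleMap_sub_le (c w : ℂ) (R θ : ℝ) : ‖circleMap c R θ - w‖ ≤ |R| + ‖c - w‖ := by
  have := norm_add_le (circleMap c R θ - c) (c - w)
  rwa [sub_add_sub_cancel, circleMap_sub_center, norm_circleMap_zero] at this

variable {m : ℕ} (a : Fin m → ℝ) (n : Fin m → ℕ) (σ c R : ℝ)

def nodePoly : ℂ[X] := ∏ k, (X - C (a k : ℂ)) ^ n k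

/-- The `s`-dependent part of the kernel, `s = σ + i u`. -/
def lineFactor (x u : ℝ) : ℂ := gaussPoly (nodePoly a n) x (σ + I * u)

/-- The `t`-dependent part of the kernel, `t = c + R e^{iθ}`, including `dt = i R e^{iθ} dθ`. -/
def circleFactor (y θ : ℝ) : ℂ :=
  circleMap 0 R θ * I *
    (cexp (-(circleMap c R θ - y) ^ 2 / 2) * ∏ l, (circleMap c R θ - a l) ^ (-(n l : ℤ)))

def kernelIntegrand (x y : ℝ) (q : ℝ × ℝ) : ℂ :=
  lineFactor a n σ x q.1 * circleFactor a n c R y q.2 * ((σ : ℂ) + I * q.1 - circleMap c R q.2)⁻¹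

def lineCircleMeasure : Measure (ℝ × ℝ) := volume.prod (volume.restrict (Ioc 0 (2 * Real.pi)))

variable {a n σ c R}

lemma measurable_kernelIntegrand (x y : ℝ) : Measurable (kernelIntegrand a n σ c R x y) := by
  unfold kernelIntegrand lineFactor circleFactor gaussPoly
  fun_prop

lemma sub_le_norm_sub_circleMap (hR : 0 ≤ R) (u θ : ℝ) :
    |σ - c| - R ≤ ‖(σ : ℂ) + I * u - circleMap c R θ‖ := by
  have hre : |σ - c| ≤ ‖(σ : ℂ) + I * u - c‖ := by simpa using abs_re_le_norm ((σ : ℂ) + I * u - c)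
  have := abs_norm_sub_sub_le_norm_circleMap_sub hR c ((σ : ℂ) + I * u) θ
  rw [norm_sub_rev]
  linarith [le_abs_self (‖(σ : ℂ) + I * u - c‖ - R)]

lemma norm_circleFactor_le (hR : 0 ≤ R) (hc : ∀ l, |a l - c| < R) (y θ : ℝ) :
    ‖circleFactor a n c R y θ‖ ≤
      R * (Real.exp ((R + |c - y|) ^ 2 / 2) * ∏ l, (R - |a l - c|)⁻¹ ^ n l) := by
  have ht : ‖circleMap c R θ - y‖ ≤ R + |c - y| := by
    simpa [abs_of_nonneg hR, ← ofReal_sub, norm_real] using norm_circleMap_sub_le c y R θ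
  have hexp : ‖cexp (-(circleMap c R θ - y) ^ 2 / 2)‖ ≤ Real.exp ((R + |c - y|) ^ 2 / 2) := by
    refine (norm_exp_le_exp_norm _).trans (Real.exp_le_exp.2 ?_)
    rw [norm_div, norm_neg, norm_pow, RCLike.norm_ofNat]
    gcongr
  have hprod : ‖∏ l, (circleMap c R θ - a l) ^ (-(n l : ℤ))‖ ≤ ∏ l, (R - |a l - c|)⁻¹ ^ n l := by
    rw [norm_prod]
    refine Finset.prod_le_prod (fun _ _ => norm_nonneg _) fun l _ => ?_
    have hdist : R - |a l - c| ≤ ‖circleMap c R θ - a l‖ := by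
      have := abs_norm_sub_sub_le_norm_circleMap_sub hR c (a l) θ
      rw [← ofReal_sub, norm_real, Real.norm_eq_abs] at this
      linarith [neg_abs_le (|a l - c| - R)]
    rw [zpow_neg, zpow_natCast, norm_inv, norm_pow, inv_pow]
    have hpos : 0 < R - |a l - c| := sub_pos.2 (hc l)
    gcongr
  rw [circleFactor, norm_mul, norm_mul, norm_mul, norm_circleMap_zero, norm_I, mul_one,
    abs_of_nonneg hR]
  gcongr

lemma exists_norm_kernelIntegrand_le (hR : 0 ≤ R) (hc : ∀ l, |a l - c| < R) (hσ : R < |σ - c|) :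
    ∃ A B : ℝ → ℝ, Continuous A ∧ Continuous B ∧ ∀ x y q,
      ‖kernelIntegrand a n σ c R x y q‖ ≤ A x * B y * gaussBound (nodePoly a n).natDegree q.1 := by
  refine ⟨fun x => coeffNormSum (nodePoly a n) * (1 + |σ|) ^ (nodePoly a n).natDegree *
      Real.exp ((σ - x) ^ 2 / 2),
    fun y => R * (Real.exp ((R + |c - y|) ^ 2 / 2) * ∏ l, (R - |a l - c|)⁻¹ ^ n l) *
      (|σ - c| - R)⁻¹, by fun_prop, by fun_prop, fun x y q => ?_⟩
  have hinv : ‖((σ : ℂ) + I * q.1 - circleMap c R q.2)⁻¹‖ ≤ (|σ - c| - R)⁻¹ := by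
    rw [norm_inv]
    exact inv_anti₀ (by linarith) (sub_le_norm_sub_circleMap hR q.1 q.2)
  have hline : ‖lineFactor a n σ x q.1‖ ≤ _ := norm_gaussPoly_vertical_le _ x σ q.1
  have hcircle := norm_circleFactor_le (n := n) hR hc y q.2
  rw [kernelIntegrand, norm_mul, norm_mul]
  have hline₀ := (norm_nonneg _).trans hline
  refine (mul_le_mul (mul_le_mul hline hcircle (norm_nonneg _) hline₀) hinv (norm_nonneg _)
    (mul_nonneg hline₀ ((norm_nonneg _).trans hcircle))).trans_eq ?_
  ring

lemma hasDerivAt_lineFactor (x u : ℝ) :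
    HasDerivAt (lineFactor a n σ · u) ((x - ((σ : ℂ) + I * u)) * lineFactor a n σ x u) x := by
  set s : ℂ := σ + I * u
  have hexp : HasDerivAt (fun z : ℂ => cexp ((s - z) ^ 2 / 2))
      ((x - s) * cexp ((s - x) ^ 2 / 2)) (x : ℂ) := by
    refine ((((hasDerivAt_id (x : ℂ)).const_sub s).pow 2).div_const 2).cexp.congr_deriv ?_
    simp only [id, Pi.pow_apply]
    ring
  refine (hexp.const_mul ((nodePoly a n).eval s)).comp_ofReal.congr_deriv ?_
  simp only [lineFactor, gaussPoly, s]
  ring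

lemma hasDerivAt_circleFactor (y θ : ℝ) :
    HasDerivAt (circleFactor a n c R · θ) ((circleMap c R θ - y) * circleFactor a n c R y θ) y := by
  set t := circleMap c R θ
  have hexp : HasDerivAt (fun z : ℂ => cexp (-(t - z) ^ 2 / 2))
      ((t - y) * cexp (-(t - y) ^ 2 / 2)) (y : ℂ) := by
    refine (((((hasDerivAt_id (y : ℂ)).const_sub t).pow 2).neg.div_const 2).cexp).congr_deriv ?_
    simp only [id, Pi.pow_apply, Pi.neg_apply]
    ring
  refine (((hexp.mul_const (∏ l, (t - a l) ^ (-(n l : ℤ)))).const_mul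
    (circleMap 0 R θ * I)).comp_ofReal).congr_deriv ?_
  simp only [circleFactor, t]
  ring

lemma integrable_kernelIntegrand (hR : 0 ≤ R) (hc : ∀ l, |a l - c| < R) (hσ : R < |σ - c|)
    (x y : ℝ) : Integrable (kernelIntegrand a n σ c R x y) lineCircleMeasure := by
  obtain ⟨A, B, -, -, hbound⟩ := exists_norm_kernelIntegrand_le (n := n) hR hc hσ
  exact (((integrable_gaussBound _).comp_fst _).const_mul (A x * B y)).mono'
    (measurable_kernelIntegrand x y).aestronglyMeasurable (Eventually.of_forall (hbound x y))

lemma hasDerivAt_integral_kernelIntegrand_fst (hR : 0 ≤ R) (hc : ∀ l, |a l - c| < R)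
    (hσ : R < |σ - c|) (x y : ℝ) :
    Integrable (fun q => (x - ((σ : ℂ) + I * q.1)) * kernelIntegrand a n σ c R x y q)
        lineCircleMeasure ∧
      HasDerivAt (fun x => ∫ q, kernelIntegrand a n σ c R x y q ∂lineCircleMeasure)
        (∫ q, (x - ((σ : ℂ) + I * q.1)) * kernelIntegrand a n σ c R x y q ∂lineCircleMeasure)
        x := by
  obtain ⟨A, B, hA, hB, hbound⟩ := exists_norm_kernelIntegrand_le (n := n) hR hc hσ
  have hmeas := measurable_kernelIntegrand (a := a) (n := n) (σ := σ) (c := c) (R := R) x y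
  refine hasDerivAt_integral_of_norm_le_mul
    (F' := fun x q => (x - ((σ : ℂ) + I * q.1)) * kernelIntegrand a n σ c R x y q)
    (C := fun x => (1 + |x - σ|) * A x * B y)
    (g := fun q => gaussBound ((nodePoly a n).natDegree + 1) q.1)
    (fun x => (measurable_kernelIntegrand x y).aestronglyMeasurable)
    (integrable_kernelIntegrand hR hc hσ x y)
    (by fun_prop : Measurable _).aestronglyMeasurable
    (by fun_prop) ((integrable_gaussBound _).comp_fst _) (fun x q => ?_)
    (fun x q => ((hasDerivAt_lineFactor x q.1).mul_const _).mul_const _ |>.congr_deriv (by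
      simp only [kernelIntegrand]; ring))
  have hs : ‖(x : ℂ) - (σ + I * q.1)‖ ≤ (1 + |x - σ|) * (1 + |q.1|) := by
    have : ‖(x : ℂ) - (σ + I * q.1)‖ ≤ |x - σ| + |q.1| := by
      simpa [← sub_sub, ← ofReal_sub, norm_real] using norm_sub_le ((x - σ : ℝ) : ℂ) (I * q.1)
    nlinarith [abs_nonneg (x - σ), abs_nonneg q.1]
  rw [norm_mul, gaussBound_succ]
  refine (mul_le_mul hs (hbound x y q) (norm_nonneg _) (by positivity)).trans_eq ?_
  ring

lemma hasDerivAt_integral_kernelIntegrand_snd (hR : 0 ≤ R) (hc : ∀ l, |a l - c| < R)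
    (hσ : R < |σ - c|) (x y : ℝ) :
    Integrable (fun q => (circleMap c R q.2 - y) * kernelIntegrand a n σ c R x y q)
        lineCircleMeasure ∧
      HasDerivAt (fun y => ∫ q, kernelIntegrand a n σ c R x y q ∂lineCircleMeasure)
        (∫ q, (circleMap c R q.2 - y) * kernelIntegrand a n σ c R x y q ∂lineCircleMeasure) y := by
  obtain ⟨A, B, hA, hB, hbound⟩ := exists_norm_kernelIntegrand_le (n := n) hR hc hσ
  have hmeas := measurable_kernelIntegrand (a := a) (n := n) (σ := σ) (c := c) (R := R) x y
  refine hasDerivAt_integral_of_norm_le_mul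
    (F' := fun y q => (circleMap c R q.2 - y) * kernelIntegrand a n σ c R x y q)
    (C := fun y => (R + |c - y|) * A x * B y)
    (g := fun q => gaussBound (nodePoly a n).natDegree q.1)
    (fun y => (measurable_kernelIntegrand x y).aestronglyMeasurable)
    (integrable_kernelIntegrand hR hc hσ x y)
    (by fun_prop : Measurable _).aestronglyMeasurable
    (by fun_prop) ((integrable_gaussBound _).comp_fst _) (fun y q => ?_)
    (fun y q => ((hasDerivAt_circleFactor y q.2).const_mul _).mul_const _ |>.congr_deriv (by
      simp only [kernelIntegrand]; ring))
  have ht : ‖circleMap c R q.2 - y‖ ≤ R + |c - y| := by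
    simpa [abs_of_nonneg hR, ← ofReal_sub, norm_real] using norm_circleMap_sub_le c y R q.2
  rw [norm_mul]
  refine (mul_le_mul ht (hbound x y q) (norm_nonneg _) (by positivity)).trans_eq ?_
  ring

lemma kernelIntegrand_eq_circleIntegrand (x y u θ : ℝ) :
    deriv (circleMap c R) θ •
        (cexp (((σ : ℂ) + I * u - x) ^ 2 / 2 - (circleMap c R θ - y) ^ 2 / 2) *
          (∏ k, (((σ : ℂ) + I * u - a k) / (circleMap c R θ - a k)) ^ (n k)) *
          ((σ : ℂ) + I * u - circleMap c R θ)⁻¹) =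
      kernelIntegrand a n σ c R x y (u, θ) := by
  have hprod : ∏ k, (((σ : ℂ) + I * u - a k) / (circleMap c R θ - a k)) ^ (n k) =
      (∏ k, ((σ : ℂ) + I * u - a k) ^ n k) * ∏ k, (circleMap c R θ - a k) ^ (-(n k : ℤ)) := by
    rw [← Finset.prod_mul_distrib]
    refine Finset.prod_congr rfl fun k _ => ?_
    rw [div_pow, zpow_neg, zpow_natCast, div_eq_mul_inv]
  have hexp : cexp (((σ : ℂ) + I * u - x) ^ 2 / 2 - (circleMap c R θ - y) ^ 2 / 2) =
      cexp (((σ : ℂ) + I * u - x) ^ 2 / 2) * cexp (-(circleMap c R θ - y) ^ 2 / 2) := by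
    rw [← exp_add]; ring_nf
  simp only [kernelIntegrand, lineFactor, circleFactor, gaussPoly, nodePoly, deriv_circleMap,
    smul_eq_mul, eval_prod, eval_pow, eval_sub, eval_X, eval_C, hprod, hexp]
  ring

lemma mhK_eq_integral (hR : 0 ≤ R) (hc : ∀ l, |a l - c| < R) (hσ : R < |σ - c|) (x y : ℝ) :
    mhK a n σ c R x y =
      ((2 * Real.pi * I) ^ 2)⁻¹ * (∫ q, kernelIntegrand a n σ c R x y q ∂lineCircleMeasure) *
        I := by
  rw [mhK, lineCircleMeasure, integral_prod _ (integrable_kernelIntegrand hR hc hσ x y),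
    mul_assoc _ (integral _ _) I, ← integral_mul_const]
  congr 2 with u
  rw [circleIntegral, intervalIntegral.integral_of_le Real.two_pi_pos.le]
  exact congrArg (· * I) (setIntegral_congr_fun measurableSet_Ioc fun θ _ =>
    kernelIntegrand_eq_circleIntegrand x y u θ)

lemma integral_lineFactor (x : ℝ) :
    ∫ u, lineFactor a n σ x u = Real.sqrt (2 * Real.pi) * mhP a n x := by
  have hsqrt : (Real.sqrt (2 * Real.pi) : ℂ) ≠ 0 :=
    ofReal_ne_zero.2 (Real.sqrt_ne_zero'.2 Real.two_pi_pos)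
  rw [mhP, mul_inv_cancel_left₀ hsqrt]
  unfold lineFactor
  rw [integral_gaussPoly_vertical_eq _ x σ x]
  congr 1 with u
  have hsq : ((x : ℂ) + I * u - x) ^ 2 / 2 = -(u : ℂ) ^ 2 / 2 := by ring_nf; rw [I_sq]; ring
  simp only [gaussPoly, nodePoly, eval_prod, eval_pow, eval_sub, eval_X, eval_C, hsq]
  rw [mul_comm]
  congr 1
  exact Finset.prod_congr rfl fun k _ => by ring

lemma integral_circleFactor (y : ℝ) :
    ∫ θ in Ioc 0 (2 * Real.pi), circleFactor a n c R y θ =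
      (Real.sqrt (2 * Real.pi) * (2 * Real.pi * I)) * mhQ a c R n y := by
  have hne : (Real.sqrt (2 * Real.pi) : ℂ) * (2 * Real.pi * I) ≠ 0 :=
    mul_ne_zero (ofReal_ne_zero.2 (Real.sqrt_ne_zero'.2 Real.two_pi_pos))
      (by simp [Real.pi_ne_zero, I_ne_zero])
  rw [mhQ, mul_inv_cancel_left₀ hne, circleIntegral,
    intervalIntegral.integral_of_le Real.two_pi_pos.le]
  refine setIntegral_congr_fun measurableSet_Ioc fun θ _ => ?_
  simp only [circleFactor, deriv_circleMap, smul_eq_mul]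

lemma kernelIntegrand_fst_add_snd (hR : 0 ≤ R) (hσ : R < |σ - c|) (x y : ℝ) (q : ℝ × ℝ) :
    (x - ((σ : ℂ) + I * q.1)) * kernelIntegrand a n σ c R x y q +
        (circleMap c R q.2 - y) * kernelIntegrand a n σ c R x y q =
      (x - y) * kernelIntegrand a n σ c R x y q -
        lineFactor a n σ x q.1 * circleFactor a n c R y q.2 := by
  have hne : (σ : ℂ) + I * q.1 - circleMap c R q.2 ≠ 0 := fun h => by
    have := sub_le_norm_sub_circleMap (σ := σ) (c := c) hR q.1 q.2
    rw [h, norm_zero] at this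
    linarith
  simp only [kernelIntegrand]
  linear_combination (-(lineFactor a n σ x q.1 * circleFactor a n c R y q.2)) *
    mul_inv_cancel₀ hne

lemma integral_fst_add_integral_snd (hR : 0 ≤ R) (hc : ∀ l, |a l - c| < R) (hσ : R < |σ - c|)
    (x y : ℝ) :
    (∫ q, (x - ((σ : ℂ) + I * q.1)) * kernelIntegrand a n σ c R x y q ∂lineCircleMeasure) +
        ∫ q, (circleMap c R q.2 - y) * kernelIntegrand a n σ c R x y q ∂lineCircleMeasure =
      (x - y) * (∫ q, kernelIntegrand a n σ c R x y q ∂lineCircleMeasure) -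
        (Real.sqrt (2 * Real.pi) * mhP a n x) *
          ((Real.sqrt (2 * Real.pi) * (2 * Real.pi * I)) * mhQ a c R n y) := by
  have hline : Integrable (lineFactor a n σ x) := integrable_gaussPoly_vertical _ x σ
  have hcircle : IntegrableOn (circleFactor a n c R y) (Ioc 0 (2 * Real.pi)) :=
    Integrable.of_bound (by unfold circleFactor; fun_prop) _
      (Eventually.of_forall (norm_circleFactor_le hR hc y))
  rw [← integral_add (hasDerivAt_integral_kernelIntegrand_fst hR hc hσ x y).1
      (hasDerivAt_integral_kernelIntegrand_snd hR hc hσ x y).1,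
    integral_congr_ae (Eventually.of_forall (kernelIntegrand_fst_add_snd hR hσ x y)),
    integral_sub ((integrable_kernelIntegrand hR hc hσ x y).const_mul _)
      (hline.mul_prod hcircle),
    integral_const_mul, lineCircleMeasure, integral_prod_mul, integral_lineFactor,
    integral_circleFactor]

end MultipleHermite

end

open MultipleHermite

theorem stmt_8_general (m : ℕ) (a : Fin m → ℝ)
    (n : Fin m → ℕ)
    (σ c R : ℝ) (hR : 0 < R) (hc : ∀ l, |a l - c| < R) (hσ : R < |σ - c|) :
    ∀ x y : ℝ, ∃ Kx Ky : ℂ,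
      HasDerivAt (fun x' : ℝ => mhK a n σ c R x' y) Kx x ∧
      HasDerivAt (fun y' : ℝ => mhK a n σ c R x y') Ky y ∧
      Kx + Ky = ((x : ℂ) - (y : ℂ)) * mhK a n σ c R x y - mhP a n x * mhQ a c R n y := by
  intro x y
  have hK := mhK_eq_integral (a := a) (n := n) hR.le hc hσ
  have hx := (hasDerivAt_integral_kernelIntegrand_fst (n := n) hR.le hc hσ x y).2
  have hy := (hasDerivAt_integral_kernelIntegrand_snd (n := n) hR.le hc hσ x y).2
  refine ⟨_, _, by simpa only [hK] using (hx.const_mul _).mul_const I,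
    by simpa only [hK] using (hy.const_mul _).mul_const I, ?_⟩
  have hsqrt : (Real.sqrt (2 * Real.pi) : ℂ) ^ 2 = 2 * Real.pi := by
    rw [← ofReal_pow, Real.sq_sqrt (by positivity)]; push_cast; ring
  rw [hK, ← add_mul, ← mul_add, integral_fst_add_integral_snd hR.le hc hσ x y]
  field_simp
  linear_combination (-(2 * Real.pi * I) * mhP a n x * mhQ a c R n y) * hsqrt

theorem stmt_8 (m : ℕ) (hm : 1 ≤ m) (a : Fin m → ℝ) (ha : Function.Injective a)
    (n : Fin m → ℕ) (hn : ∀ k, 1 ≤ n k)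
    (σ c R : ℝ) (hR : 0 < R) (hc : ∀ l, |a l - c| < R) (hσ : R < |σ - c|) :
    ∀ x y : ℝ, ∃ Kx Ky : ℂ,
      HasDerivAt (fun x' : ℝ => mhK a n σ c R x' y) Kx x ∧
      HasDerivAt (fun y' : ℝ => mhK a n σ c R x y') Ky y ∧
      Kx + Ky = ((x : ℂ) - (y : ℂ)) * mhK a n σ c R x y - mhP a n x * mhQ a c R n y :=
  stmt_8_general m a n σ c R hR hc hσ
end

section
/- Let r satisfy 0 < r < min_k β_k. Then there exists a monic polynomial P of degree |n| = n_1 + ⋯ + n_m with real coefficients such that for every x ∈ ℝ, ∮_{|s|=r} exp(x·s) · s^{−|n|−p−1} · ∏_{k=1}^m (s − β_k)^{n_k} ds = (2πi · ∏_{k=1}^m (−β_k)^{n_k} / (|n|+p)!) · x^p · P(x), where the circle integral is taken counterclockwise over the circle of center 0 and radius r. -/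
/-!
Expanding `∏ₖ (s - βₖ) ^ nₖ = Q(s) = ∑ⱼ cⱼ sʲ` (of degree `N = ∑ₖ nₖ`), the integral splits
into the integrals `∮ exp (x s) s ^ (-(N + p - j) - 1) ds = 2πi x ^ (N + p - j) / (N + p - j)!`
given by Cauchy's formula for the derivatives of `exp (x ·)` at `0`. Since
`(N + p)! / (N + p - j)!` is the descending factorial, the resulting sum is `2πi x ^ p / (N + p)!`
times `∑ⱼ cⱼ (N + p)⋯(N + p - j + 1) x ^ (N - j)`, a polynomial of degree `N` with leading
coefficient `c₀ = ∏ₖ (-βₖ) ^ nₖ ≠ 0`.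
-/

open MeasureTheory Finset

namespace Polynomial

variable {R : Type*} [CommSemiring R]

/-- `x ^ (M - deg Q) * (residuePoly Q M).eval x / M!` is the coefficient of `s ^ M` in
`exp (x s) Q(s)`. -/
noncomputable def residuePoly (Q : R[X]) (M : ℕ) : R[X] :=
  ∑ j ∈ range (Q.natDegree + 1), C (Q.coeff j * M.descFactorial j) * X ^ (Q.natDegree - j)

theorem natDegree_residuePoly_le (Q : R[X]) (M : ℕ) :
    (residuePoly Q M).natDegree ≤ Q.natDegree :=
  natDegree_sum_le_of_forall_le _ _ fun _ _ =>
    (natDegree_C_mul_X_pow_le _ _).trans (Nat.sub_le _ _)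

theorem coeff_residuePoly_natDegree (Q : R[X]) (M : ℕ) :
    (residuePoly Q M).coeff Q.natDegree = Q.coeff 0 := by
  rw [residuePoly, finsetSum_coeff, sum_eq_single 0]
  · simp
  · intro j hj hj0
    rw [coeff_C_mul_X_pow, if_neg (by have := mem_range.1 hj; omega)]
  · simp

variable {Q : R[X]} {M : ℕ}

theorem natDegree_residuePoly (hQ : Q.coeff 0 ≠ 0) :
    (residuePoly Q M).natDegree = Q.natDegree :=
  (natDegree_residuePoly_le Q M).antisymm <|
    le_natDegree_of_ne_zero <| by rwa [coeff_residuePoly_natDegree]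

theorem leadingCoeff_residuePoly (hQ : Q.coeff 0 ≠ 0) :
    (residuePoly Q M).leadingCoeff = Q.coeff 0 := by
  rw [leadingCoeff, natDegree_residuePoly hQ, coeff_residuePoly_natDegree]

theorem sum_coeff_mul_pow_div_factorial_eq {K : Type*} [Field K] [CharZero K] [Algebra R K]
    (hQM : Q.natDegree ≤ M) (x : K) :
    ∑ j ∈ range (Q.natDegree + 1), algebraMap R K (Q.coeff j) * x ^ (M - j) / (M - j).factorial =
      x ^ (M - Q.natDegree) * aeval x (residuePoly Q M) / M.factorial := by
  simp only [residuePoly, map_sum, map_mul, aeval_C, aeval_X_pow, mul_sum, sum_div]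
  refine sum_congr rfl fun j hj => ?_
  have hjN : j ≤ Q.natDegree := Nat.lt_succ_iff.1 (mem_range.1 hj)
  have hfac : ((M - j).factorial : K) * M.descFactorial j = M.factorial := by
    exact_mod_cast Nat.factorial_mul_descFactorial (hjN.trans hQM)
  have hpow : x ^ (M - j) = x ^ (M - Q.natDegree) * x ^ (Q.natDegree - j) := by
    rw [← pow_add]; congr 1; omega
  have hdesc : (M.descFactorial j : K) ≠ 0 :=
    Nat.cast_ne_zero.2 fun h => by have := Nat.descFactorial_eq_zero_iff_lt.1 h; omega
  rw [hpow, ← hfac, map_natCast]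
  field_simp

section

variable {R ι : Type*} [CommRing R] [Fintype ι] (a : ι → R) (n : ι → ℕ)

theorem natDegree_prod_X_sub_C_pow [Nontrivial R] :
    (∏ i, (X - C (a i)) ^ n i).natDegree = ∑ i, n i := by
  rw [natDegree_prod_of_monic _ _ fun i _ => (monic_X_sub_C _).pow _]
  refine sum_congr rfl fun i _ => ?_
  rw [(monic_X_sub_C (a i)).natDegree_pow, natDegree_X_sub_C, mul_one]

theorem coeff_zero_prod_X_sub_C_pow :
    (∏ i, (X - C (a i)) ^ n i).coeff 0 = ∏ i, (-a i) ^ n i := by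
  rw [coeff_zero_eq_eval_zero, eval_prod]
  simp

end

end Polynomial

section
open Complex Polynomial

theorem circleIntegral_exp_mul_mul_zpow_neg_sub_one {R : ℝ} (hR : 0 < R) (x : ℂ) (q : ℕ) :
    (∮ s in C(0, R), exp (x * s) * s ^ (-(q : ℤ) - 1)) =
      2 * Real.pi * I * x ^ q / q.factorial := by
  have cauchy := (by fun_prop : Differentiable ℂ fun s => exp (x * s)).differentiableOn
    |>.circleIntegral_one_div_sub_center_pow_smul (c := 0) hR q
  have hpow : ∀ s : ℂ, s ^ (-(q : ℤ) - 1) = 1 / s ^ (q + 1) := fun s => by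
    rw [← neg_add', one_div, zpow_neg]; norm_cast
  simp only [sub_zero, smul_eq_mul, iteratedDeriv_cexp_const_mul, mul_zero, exp_zero,
    mul_one] at cauchy
  simp_rw [hpow, mul_comm (exp _), cauchy]
  ring

theorem circleIntegrable_exp_mul_mul_zpow {R : ℝ} (hR : 0 < R) (x : ℂ) (e : ℤ) :
    CircleIntegrable (fun s => exp (x * s) * s ^ e) 0 R := by
  have hzpow : CircleIntegrable (fun s => s ^ e) 0 R := by
    simpa using circleIntegrable_sub_zpow_iff (c := 0) (w := 0) (R := R) (n := e) |>.2
      (Or.inr (Or.inr (by simp [abs_of_pos hR, hR.ne])))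
  exact hzpow.fun_continuousOn_mul (by fun_prop)

theorem circleIntegral_exp_mul_mul_zpow_mul_aeval {R : ℝ} (hR : 0 < R) (x : ℂ) {Q : ℝ[X]}
    {M : ℕ} (hQM : Q.natDegree ≤ M) :
    (∮ s in C(0, R), exp (x * s) * s ^ (-(M : ℤ) - 1) * aeval s Q) = 2 * Real.pi * I *
      ∑ j ∈ range (Q.natDegree + 1),
        algebraMap ℝ ℂ (Q.coeff j) * x ^ (M - j) / (M - j).factorial := by
  have hexpand : ∀ s : ℂ, exp (x * s) * s ^ (-(M : ℤ) - 1) * aeval s Q =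
      ∑ j ∈ range (Q.natDegree + 1),
        algebraMap ℝ ℂ (Q.coeff j) * (exp (x * s) * s ^ (-((M - j : ℕ) : ℤ) - 1)) := by
    intro s
    rw [aeval_eq_sum_range, mul_sum]
    refine sum_congr rfl fun j hj => ?_
    have hjM : j ≤ M := (Nat.lt_succ_iff.1 (mem_range.1 hj)).trans hQM
    -- `zpow_add'` needs no `s ≠ 0`, as the exponent `-(M - j) - 1` is nonzero
    rw [show -((M - j : ℕ) : ℤ) - 1 = (-(M : ℤ) - 1) + j by push_cast [hjM]; ring,
      zpow_add' (Or.inr (Or.inl (by omega))), zpow_natCast, Algebra.smul_def]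
    ring
  simp_rw [hexpand]
  rw [circleIntegral.integral_fun_sum fun j _ =>
    (circleIntegrable_exp_mul_mul_zpow hR x _).fun_continuousOn_mul continuousOn_const, mul_sum]
  refine sum_congr rfl fun j _ => ?_
  rw [circleIntegral.integral_const_mul, circleIntegral_exp_mul_mul_zpow_neg_sub_one hR]
  ring

theorem exists_monic_circleIntegral_exp_mul_zpow_mul_aeval {R : ℝ} (hR : 0 < R) {Q : ℝ[X]}
    (hQ : Q.coeff 0 ≠ 0) (p : ℕ) :
    ∃ P : ℝ[X], P.Monic ∧ P.natDegree = Q.natDegree ∧ ∀ x : ℝ,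
      (∮ s in C(0, R), exp (x * s) * s ^ (-(Q.natDegree : ℤ) - p - 1) * aeval s Q) =
        2 * Real.pi * I * algebraMap ℝ ℂ (Q.coeff 0) / (Q.natDegree + p).factorial * x ^ p *
          (P.eval x : ℝ) := by
  refine ⟨C (Q.coeff 0)⁻¹ * residuePoly Q (Q.natDegree + p), ?_, ?_, fun x => ?_⟩
  · exact monic_C_mul_of_mul_leadingCoeff_eq_one
      (by rw [leadingCoeff_residuePoly hQ, inv_mul_cancel₀ hQ])
  · rw [natDegree_C_mul (inv_ne_zero hQ), natDegree_residuePoly hQ]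
  have hQC : algebraMap ℝ ℂ (Q.coeff 0) ≠ 0 := (_root_.map_ne_zero _).2 hQ
  have hexp : -(Q.natDegree : ℤ) - p - 1 = -((Q.natDegree + p : ℕ) : ℤ) - 1 := by
    push_cast; ring
  rw [hexp, circleIntegral_exp_mul_mul_zpow_mul_aeval hR _ le_self_add,
    sum_coeff_mul_pow_div_factorial_eq le_self_add, Nat.add_sub_cancel_left,
    show ((eval x _ : ℝ) : ℂ) = aeval (x : ℂ) _ from
      (aeval_algebraMap_apply_eq_algebraMap_eval x _).symm, map_mul, aeval_C, map_inv₀]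
  field_simp

end

theorem stmt_10_general (m : ℕ) (β : Fin m → ℝ) (hβpos : ∀ k, 0 < β k) (n : Fin m → ℕ) (p : ℕ)
    (r : ℝ) (hr : 0 < r) :
    ∃ P : Polynomial ℝ, P.Monic ∧ P.natDegree = ∑ k, n k ∧
      ∀ x : ℝ,
        (∮ s in C((0 : ℂ), r),
          Complex.exp ((x : ℂ) * s) * s ^ (-(∑ k, n k : ℤ) - (p : ℤ) - 1) *
            ∏ k, (s - (β k : ℂ)) ^ (n k)) =
        2 * Real.pi * Complex.I * (∏ k, (-(β k : ℂ)) ^ (n k)) /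
            (((∑ k, n k) + p).factorial : ℂ) * (x : ℂ) ^ p * ((P.eval x : ℝ) : ℂ) := by
  have hQ0 : (∏ k, (Polynomial.X - Polynomial.C (β k)) ^ n k).coeff 0 ≠ 0 := by
    rw [Polynomial.coeff_zero_prod_X_sub_C_pow]
    exact prod_ne_zero_iff.2 fun k _ => pow_ne_zero _ (neg_ne_zero.2 (hβpos k).ne')
  obtain ⟨P, hPmonic, hPdeg, hP⟩ := exists_monic_circleIntegral_exp_mul_zpow_mul_aeval hr hQ0 p
  rw [Polynomial.natDegree_prod_X_sub_C_pow] at hPdeg hP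
  refine ⟨P, hPmonic, hPdeg, fun x => ?_⟩
  simpa [Polynomial.coeff_zero_prod_X_sub_C_pow] using hP x

theorem stmt_10 (m : ℕ) (hm : 1 ≤ m) (β : Fin m → ℝ) (hβpos : ∀ k, 0 < β k)
    (hβ : Function.Injective β) (n : Fin m → ℕ) (hn : ∀ k, 1 ≤ n k) (p : ℕ)
    (r : ℝ) (hr : 0 < r) (hrβ : ∀ k, r < β k) :
    ∃ P : Polynomial ℝ, P.Monic ∧ P.natDegree = ∑ k, n k ∧
      ∀ x : ℝ,
        (∮ s in C((0 : ℂ), r),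
          Complex.exp ((x : ℂ) * s) * s ^ (-(∑ k, n k : ℤ) - (p : ℤ) - 1) *
            ∏ k, (s - (β k : ℂ)) ^ (n k)) =
        2 * Real.pi * Complex.I * (∏ k, (-(β k : ℂ)) ^ (n k)) /
            (((∑ k, n k) + p).factorial : ℂ) * (x : ℂ) ^ p * ((P.eval x : ℝ) : ℂ) :=
  stmt_10_general m β hβpos n p r hr
end

section
/- For every k ∈ {1, …, m} and every real r with 0 < r < min(β_k, min_{l≠k} |β_k − β_l|), there exists a polynomial A_k with real coefficients of degree at most n_k − 1 such that for every x ∈ ℝ, −(∏_{l=1}^m (−β_l)^{n_l} / (2πi · (|n|+p−1)!)) · ∮_{|t − β_k| = r} exp(−x·t) · t^{|n|+p−1} · ∏_{l=1}^m (t − β_l)^{−n_l} dt = A_k(x) · exp(−β_k x), where the circle integral is taken counterclockwise over the circle of center β_k and radius r. -/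
open MeasureTheory Finset

/-!
Splitting off the factor `(t - β k) ^ (-n k)`, the integrand is `exp (-x t) G t / (t - β k) ^ n k`
with `G` holomorphic on the closed disc, so by Cauchy's formula for derivatives the integral is
`2πi / (n k - 1)!` times the `(n k - 1)`-st derivative of `t ↦ exp (-x t) G t` at `β k`.
Leibniz's rule writes this derivative as `exp (-β k x)` times a polynomial of degree `< n k` in `x`
whose coefficients are derivatives of `G` at `β k`; they are real because `G` commutes with
complex conjugation.
-/

open Complex Polynomial Metric ComplexConjugate
open scoped Nat Real

lemma iteratedDeriv_conj_conj (f : ℂ → ℂ) (j : ℕ) :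
    iteratedDeriv j (conj ∘ f ∘ conj) = conj ∘ iteratedDeriv j f ∘ conj := by
  induction j with
  | zero => simp
  | succ j ih => rw [iteratedDeriv_succ, iteratedDeriv_succ, ih, deriv_conj_conj]

lemma im_iteratedDeriv_ofReal_eq_zero {f : ℂ → ℂ} (hf : ∀ z, f (conj z) = conj (f z))
    (j : ℕ) (c : ℝ) : (iteratedDeriv j f c).im = 0 := by
  have hf' : conj ∘ f ∘ conj = f := funext fun z => by simp [hf]
  have := congrFun (iteratedDeriv_conj_conj f j) c
  rw [hf', Function.comp_apply, Function.comp_apply, conj_ofReal] at this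
  exact conj_eq_iff_im.mp this.symm

lemma circleIntegral_exp_mul_div_sub_pow {G : ℂ → ℂ} {c : ℂ} {R : ℝ} (hR : 0 < R)
    (hG : DifferentiableOn ℂ G (closedBall c R)) (x : ℂ) (j : ℕ) :
    (∮ t in C(c, R), exp (-(x * t)) * G t / (t - c) ^ (j + 1)) =
      2 * π * I / j ! * exp (-(x * c)) *
        ∑ i ∈ range (j + 1), j.choose i * (-x) ^ i * iteratedDeriv (j - i) G c := by
  set E : ℂ → ℂ := fun t => exp (-x * t)
  have hE : Differentiable ℂ E := by fun_prop
  have hG_c : ContDiffAt ℂ j G c := (hG.analyticAt (closedBall_mem_nhds c hR)).contDiffAt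
  have hcauchy := (hE.differentiableOn.mul hG).circleIntegral_one_div_sub_center_pow_smul hR j
  rw [iteratedDeriv_mul hE.contDiff.contDiffAt hG_c] at hcauchy
  simp only [E, iteratedDeriv_cexp_const_mul] at hcauchy
  convert hcauchy using 1
  · congr 1; ext t; simp only [div_eq_inv_mul, mul_one, neg_mul, Pi.mul_apply, smul_eq_mul]
  · rw [mul_assoc, mul_sum]; congr 1
    refine sum_congr rfl fun i _ => ?_
    rw [neg_mul]; ring

lemma exists_polynomial_circleIntegral_exp_mul_div_sub_pow {G : ℂ → ℂ} {c R : ℝ} (hR : 0 < R)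
    (hG : DifferentiableOn ℂ G (closedBall (c : ℂ) R))
    (hG_real : ∀ i, (iteratedDeriv i G c).im = 0) (j : ℕ) :
    ∃ A : ℝ[X], A.natDegree ≤ j ∧ ∀ x : ℝ,
      (∮ t in C((c : ℂ), R), exp (-(x * t)) * G t / (t - c) ^ (j + 1)) =
        2 * π * I * A.eval x * Real.exp (-(c * x)) := by
  refine ⟨∑ i ∈ range (j + 1),
    C (j.choose i * (-1) ^ i * (iteratedDeriv (j - i) G c).re / j !) * X ^ i, ?_, fun x => ?_⟩
  · refine natDegree_sum_le_of_forall_le _ _ fun i hi => (natDegree_C_mul_X_pow_le _ _).trans ?_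
    exact Nat.lt_succ_iff.mp (mem_range.mp hi)
  · have h_re : ∀ i, ((iteratedDeriv i G c).re : ℂ) = iteratedDeriv i G c :=
      fun i => Complex.ext rfl (by simp [hG_real])
    rw [circleIntegral_exp_mul_div_sub_pow hR hG, eval_finsetSum]
    simp only [eval_mul, eval_C, eval_pow, eval_X]
    push_cast
    simp only [h_re]
    rw [mul_sum, mul_sum, sum_mul]
    refine sum_congr rfl fun i _ => ?_
    have : (j ! : ℂ) ≠ 0 := by exact_mod_cast Nat.factorial_ne_zero j
    field_simp
    ring

theorem stmt_14_general (m : ℕ) (β : Fin m → ℝ) (n : Fin m → ℕ) (hn : ∀ k, 1 ≤ n k) (p : ℕ)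
    (k : Fin m) (r : ℝ) (hr : 0 < r)
    (hrk : ∀ l, l ≠ k → r < |β k - β l|) :
    ∃ A : Polynomial ℝ, A.natDegree ≤ n k - 1 ∧
      ∀ x : ℝ,
        -((∏ l, (-(β l : ℂ)) ^ (n l)) /
            (2 * Real.pi * Complex.I * (((∑ l, n l) + p - 1).factorial : ℂ))) *
          (∮ t in C((β k : ℂ), r),
            Complex.exp (-((x : ℂ) * t)) * t ^ ((∑ l, n l) + p - 1) *
              ∏ l, (t - (β l : ℂ)) ^ (-(n l : ℤ))) =
        ((A.eval x : ℝ) : ℂ) * Real.exp (-(β k * x)) := by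
  set N := (∑ l, n l) + p - 1
  obtain ⟨M, hM⟩ := Nat.exists_eq_add_of_le' (hn k)
  set G : ℂ → ℂ := fun t => t ^ N * ∏ l ∈ univ.erase k, (t - β l) ^ (-(n l : ℤ))
  have h_ne : ∀ t ∈ closedBall (β k : ℂ) r, ∀ l ∈ univ.erase k, t - β l ≠ 0 := by
    intro t ht l hl h
    rw [sub_eq_zero.mp h, mem_closedBall, dist_eq, ← ofReal_sub, norm_real, Real.norm_eq_abs,
      abs_sub_comm] at ht
    exact (hrk l (ne_of_mem_erase hl)).not_ge ht
  have hG : DifferentiableOn ℂ G (closedBall (β k : ℂ) r) := fun t ht =>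
    DifferentiableAt.differentiableWithinAt <| (differentiableAt_id.pow N).mul <|
      DifferentiableAt.fun_finsetProd fun l hl =>
        (differentiableAt_id.sub_const (β l : ℂ)).zpow (Or.inl (h_ne t ht l hl))
  have hG_real : ∀ i, (iteratedDeriv i G (β k)).im = 0 :=
    fun i => im_iteratedDeriv_ofReal_eq_zero (fun z => by simp [G, map_prod]) i (β k)
  obtain ⟨A, hA_deg, hA⟩ := exists_polynomial_circleIntegral_exp_mul_div_sub_pow hr hG hG_real M
  refine ⟨C (-(∏ l, (-β l) ^ n l) / N !) * A, ?_, fun x => ?_⟩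
  · rw [hM, Nat.add_sub_cancel]
    exact (natDegree_C_mul_le _ _).trans hA_deg
  · have h_split : ∀ t : ℂ, exp (-(x * t)) * t ^ N * ∏ l, (t - β l) ^ (-(n l : ℤ)) =
        exp (-(x * t)) * G t / (t - β k) ^ (M + 1) := fun t => by
      rw [← mul_prod_erase univ _ (mem_univ k), hM, zpow_neg, zpow_natCast]
      simp only [G]
      ring
    simp_rw [h_split, hA x]
    rw [eval_mul, eval_C]
    have : (N ! : ℂ) ≠ 0 := by exact_mod_cast N.factorial_ne_zero
    push_cast
    field_simp

theorem stmt_14 (m : ℕ) (hm : 1 ≤ m) (β : Fin m → ℝ) (hβpos : ∀ k, 0 < β k)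
    (hβ : Function.Injective β) (n : Fin m → ℕ) (hn : ∀ k, 1 ≤ n k) (p : ℕ)
    (k : Fin m) (r : ℝ) (hr : 0 < r) (hrβ : r < β k)
    (hrk : ∀ l, l ≠ k → r < |β k - β l|) :
    ∃ A : Polynomial ℝ, A.natDegree ≤ n k - 1 ∧
      ∀ x : ℝ,
        -((∏ l, (-(β l : ℂ)) ^ (n l)) /
            (2 * Real.pi * Complex.I * (((∑ l, n l) + p - 1).factorial : ℂ))) *
          (∮ t in C((β k : ℂ), r),
            Complex.exp (-((x : ℂ) * t)) * t ^ ((∑ l, n l) + p - 1) *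
              ∏ l, (t - (β l : ℂ)) ^ (-(n l : ℤ))) =
        ((A.eval x : ℝ) : ℂ) * Real.exp (-(β k * x)) :=
  stmt_14_general m β n hn p k r hr hrk
end
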